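/- arXiv:math/9609216 — 12 statements merged into one kernel-verified Lean document; each statement's English description precedes it below -/
import Mathlib

section
/- Let B be a Boolean algebra, I and J linear orders, and suppose a_t ∈ B for t ∈ I + J (the ordered sum) satisfy: t < s implies a_t < a_s in B. If f : I → J is an order isomorphism from I onto a subset of J, then the set {a_{f(t)} - a_t : t ∈ I} is a pie in B (a set of pairwise incomparable elements). -/
open Cardinal

universe u

/-- If `a : I + J → B` is strictly increasing (t < s implies a t < a s) and
    `f : I → J` is an order isomorphism onto a subset of `J`, then
    `{a_{f t} - a_t : t ∈ I}` is a pie (set of pairwise incomparable elements). -/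
theorem stmt_5 (B I J : Type u) [BooleanAlgebra B] [LinearOrder I] [LinearOrder J]
    (a : (I ⊕ₗ J) → B) (ha : ∀ t s : I ⊕ₗ J, t < s → a t < a s)
    (f : I → J) (hf : StrictMono f) :
    ∀ x ∈ {b : B | ∃ t : I, b = a (toLex (Sum.inr (f t))) \ a (toLex (Sum.inl t))},
    ∀ y ∈ {b : B | ∃ t : I, b = a (toLex (Sum.inr (f t))) \ a (toLex (Sum.inl t))},
      x ≠ y → ¬x ≤ y ∧ ¬y ≤ x := by
  set A : I → B := fun t => a (toLex (Sum.inr (f t))) \ a (toLex (Sum.inl t)) with hA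
  have key : ∀ s t : I, s < t → ¬ A s ≤ A t ∧ ¬ A t ≤ A s := by
    intro s t hst
    have hil : a (toLex (Sum.inl s)) < a (toLex (Sum.inl t)) := by
      apply ha
      exact Sum.Lex.inl_lt_inl_iff.2 hst
    have hir : a (toLex (Sum.inr (f s))) < a (toLex (Sum.inr (f t))) := by
      apply ha
      exact Sum.Lex.inr_lt_inr_iff.2 (hf hst)
    have hcross : a (toLex (Sum.inl t)) ≤ a (toLex (Sum.inr (f s))) :=
      (ha _ _ (Sum.Lex.inl_lt_inr t (f s))).le
    constructor
    · intro hle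
      have h1 : a (toLex (Sum.inl t)) \ a (toLex (Sum.inl s)) ≤ A s :=
        sdiff_le_sdiff_right hcross
      have h2 : a (toLex (Sum.inl t)) \ a (toLex (Sum.inl s)) ≤
          A t ⊓ a (toLex (Sum.inl t)) :=
        le_inf (h1.trans hle) sdiff_le
      have h3 : A t ⊓ a (toLex (Sum.inl t)) = ⊥ := by
        simp [hA, sdiff_eq, inf_assoc]
      have h4 : a (toLex (Sum.inl t)) ≤ a (toLex (Sum.inl s)) := by
        rw [← sdiff_eq_bot_iff, ← le_bot_iff]
        exact h3 ▸ h2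
      exact hil.not_ge h4
    · intro hle
      have h1 : a (toLex (Sum.inr (f t))) \ a (toLex (Sum.inr (f s))) ≤ A t :=
        sdiff_le_sdiff_left hcross
      have h2 : a (toLex (Sum.inr (f t))) \ a (toLex (Sum.inr (f s))) ≤
          A s ⊓ (a (toLex (Sum.inr (f t))) \ a (toLex (Sum.inr (f s)))) :=
        le_inf (h1.trans hle) le_rfl
      have h3 : A s ⊓ (a (toLex (Sum.inr (f t))) \ a (toLex (Sum.inr (f s)))) = ⊥ := by
        have : A s ≤ a (toLex (Sum.inr (f s))) := sdiff_le
        exact le_bot_iff.1 ((inf_le_inf_right _ this).trans_eq inf_sdiff_self_right)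
      have h4 : a (toLex (Sum.inr (f t))) ≤ a (toLex (Sum.inr (f s))) := by
        rw [← sdiff_eq_bot_iff, ← le_bot_iff]
        exact h3 ▸ h2
      exact hir.not_ge h4
    
  rintro x ⟨s, rfl⟩ y ⟨t, rfl⟩ hxy
  have hst : s ≠ t := by rintro rfl; exact hxy rfl
  rcases hst.lt_or_gt with h | h
  · exact key s t h
  · exact (key t s h).symm
end

section
/- Key claim in the pcf construction: under the hypotheses that ⟨f_α : α < λ⟩ is <_D-increasing and cofinal in ∏_{i<δ} λ_i / D where D is a σ-complete filter on δ containing co-bounded sets, λ = cf(λ) > |δ|, and given pairwise distinct indices γ(ε,α) < λ for ε < ε(*) < σ and α < λ, setting g_α(i) = min{f_{γ(ε,α)}(i) : ε < ε(*)}, the set B = {i < δ : for every ξ < λ_i there are λ many α < λ with g_α(i) > ξ} belongs to D. -/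
open Cardinal

universe u

/- Suppose `B ∉ D` and pick, for every `i ∉ B`, a witness `ξ i` such that fewer than `λ` indices
`α` satisfy `ξ i < f (γ ε α) i` for all `ε`. By cofinality `ξ <_D f β` for some `β`. For all but
fewer than `λ` indices `α` every `γ ε α` is `≥ β`, and then σ-completeness puts
`C_α = {i | ∀ ε, ξ i < f (γ ε α) i}` into `D`, so `C_α` meets the complement of `B`. Thus `λ`
indices `α` are covered by fewer than `λ` sets, one for each `i ∉ B`, each of size `< λ`:
impossible for regular `λ`. -/

section

variable {ι E : Type u} {σ : Cardinal.{u}} {D : Filter ι}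

theorem Filter.iInter_mem_of_mk_lt
    (hD : ∀ S : Set (Set ι), #S < σ → (∀ A ∈ S, A ∈ D) → ⋂₀ S ∈ D)
    (hE : #E < σ) {s : E → Set ι} (hs : ∀ ε, s ε ∈ D) : ⋂ ε, s ε ∈ D := by
  rw [← Set.sInter_range]
  exact hD _ (mk_range_le.trans_lt hE) (by rintro _ ⟨ε, rfl⟩; exact hs ε)

theorem Filter.empty_mem_of_mk_lt [Preorder ι]
    (hD : ∀ S : Set (Set ι), #S < σ → (∀ A ∈ S, A ∈ D) → ⋂₀ S ∈ D)
    (hcobounded : ∀ i : ι, {j | i < j} ∈ D) (hι : #ι < σ) : ∅ ∈ D := by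
  convert Filter.iInter_mem_of_mk_lt hD hι hcobounded
  ext j
  simpa using ⟨j, lt_irrefl j⟩

theorem Filter.setOf_forall_lt_mem_of_le {Λ : Type*} [PartialOrder Λ] {K : ι → Type*}
    [∀ i, Preorder (K i)]
    (hD : ∀ S : Set (Set ι), #S < σ → (∀ A ∈ S, A ∈ D) → ⋂₀ S ∈ D) (hE : #E < σ)
    {f : Λ → ∀ i, K i} (hfinc : ∀ α β, α < β → {i | f α i < f β i} ∈ D)
    {ξ : ∀ i, K i} {β : Λ} (hβ : {i | ξ i < f β i} ∈ D) {a : E → Λ} (ha : ∀ ε, β ≤ a ε) :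
    {i | ∀ ε, ξ i < f (a ε) i} ∈ D := by
  rw [Set.ofPred_forall]
  refine Filter.iInter_mem_of_mk_lt hD hE fun ε => ?_
  rcases (ha ε).eq_or_lt with h | h
  · rwa [← h]
  · filter_upwards [hβ, hfinc _ _ h] with i h₁ h₂ using h₁.trans h₂

end

namespace Cardinal

variable {lam : Cardinal.{u}}

theorem exists_le_mk_of_subset_iUnion (hlam : lam.IsRegular) {ι α : Type u} {G : Set α}
    (hG : lam ≤ #G) {P : ι → Set α} (hι : #ι < lam) (hGP : G ⊆ ⋃ i, P i) :
    ∃ i, lam ≤ #(P i) := by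
  by_contra! h
  exact ((mk_le_mk_of_subset hGP).trans_lt
    (mk_iUnion_le_sum_mk.trans_lt (sum_lt_of_isRegular hlam hι h))).not_ge hG

theorem le_mk_setOf_forall_le_of_injective (hlam : lam.IsRegular) {E : Type u} (hE : #E < lam)
    {γ : E → lam.ord.ToType → lam.ord.ToType} (hγ : ∀ ε, Function.Injective (γ ε))
    (β : lam.ord.ToType) : lam ≤ #{α | ∀ ε, β ≤ γ ε α} := by
  have : Infinite lam.ord.ToType := by
    rw [infinite_iff, mk_toType, card_ord]
    exact hlam.aleph0_le
  set G : Set lam.ord.ToType := {α | ∀ ε, β ≤ γ ε α}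
  have hcompl : #(Gᶜ : Set _) < lam := by
    have hsub : Gᶜ ⊆ ⋃ ε, γ ε ⁻¹' Set.Iio β := by
      intro α hα
      simpa [G] using hα
    refine (mk_le_mk_of_subset hsub).trans_lt
      (mk_iUnion_le_sum_mk.trans_lt (sum_lt_of_isRegular hlam hE fun ε => ?_))
    exact (mk_preimage_of_injective _ _ (hγ ε)).trans_lt (by simpa using mk_Iio_lt β (by simp))
  have := mk_compl_of_infinite _ (by rwa [mk_toType, card_ord])
  rw [compl_compl, mk_toType, card_ord] at this
  exact this.ge

end Cardinal

theorem Filter.setOf_forall_le_mk_mem_of_cofinal {ι E : Type u} {K : ι → Type*}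
    [∀ i, Preorder (K i)] [∀ i, Nonempty (K i)] {lam σ : Cardinal.{u}} {D : Filter ι}
    (hlam : lam.IsRegular) (hι : #ι < lam) (hElam : #E < lam) (hEσ : #E < σ)
    (hD : ∀ S : Set (Set ι), #S < σ → (∀ A ∈ S, A ∈ D) → ⋂₀ S ∈ D)
    {f : lam.ord.ToType → ∀ i, K i} (hfinc : ∀ α β, α < β → {i | f α i < f β i} ∈ D)
    (hfcof : ∀ g : ∀ i, K i, ∃ α, {i | g i < f α i} ∈ D)
    {γ : E → lam.ord.ToType → lam.ord.ToType} (hγ : ∀ ε, Function.Injective (γ ε)) :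
    {i | ∀ ξ : K i, lam ≤ #{α | ∀ ε, ξ < f (γ ε α) i}} ∈ D := by
  set B := {i | ∀ ξ : K i, lam ≤ #{α | ∀ ε, ξ < f (γ ε α) i}}
  by_contra hBD
  have hwitness : ∀ i, ∃ ξ : K i, i ∉ B → #{α | ∀ ε, ξ < f (γ ε α) i} < lam := by
    intro i
    by_cases hi : i ∈ B
    · exact ⟨Classical.arbitrary _, absurd hi⟩
    · obtain ⟨ξ, hξ⟩ : ∃ ξ : K i, #{α | ∀ ε, ξ < f (γ ε α) i} < lam := by
        simpa [B] using hi
      exact ⟨ξ, fun _ => hξ⟩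
  choose ξ hξ using hwitness
  obtain ⟨β, hβ⟩ := hfcof ξ
  have hcover : {α | ∀ ε, β ≤ γ ε α} ⊆ ⋃ i : ↥Bᶜ, {α | ∀ ε, ξ i < f (γ ε α) i} := by
    intro α hα
    have hC := Filter.setOf_forall_lt_mem_of_le hD hEσ hfinc hβ hα
    obtain ⟨i, hiC, hiB⟩ := Set.not_subset.1 fun h => hBD (Filter.mem_of_superset hC h)
    exact Set.mem_iUnion.2 ⟨⟨i, hiB⟩, hiC⟩
  obtain ⟨⟨i, hiB⟩, hi⟩ := exists_le_mk_of_subset_iUnion hlam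
    (le_mk_setOf_forall_le_of_injective hlam hElam hγ β) ((mk_set_le _).trans_lt hι) hcover
  exact (hξ i hiB).not_ge hi

theorem stmt_7_general (δ : Ordinal.{u}) (lam σ : Cardinal.{u})
    (lam_ : δ.ToType → Cardinal.{u})
    (hbetween : ∀ i, #δ.ToType < lam_ i ∧ lam_ i < lam)
    (hlamreg : lam.IsRegular)
    (D : Filter δ.ToType)
    (hDcomplete : ∀ S : Set (Set δ.ToType), #S < σ → (∀ A ∈ S, A ∈ D) → ⋂₀ S ∈ D)
    (hDcobounded : ∀ i : δ.ToType, {j | i < j} ∈ D)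
    (f : lam.ord.ToType → ∀ i : δ.ToType, (lam_ i).ord.ToType)
    (hfinc : ∀ α β, α < β → {i | f α i < f β i} ∈ D)
    (hfcof : ∀ g : ∀ i : δ.ToType, (lam_ i).ord.ToType, ∃ α, {i | g i < f α i} ∈ D)
    (E : Type u) (hE : #E < σ)
    (γ : E → lam.ord.ToType → lam.ord.ToType)
    (hγ : ∀ ε, Function.Injective (γ ε)) :
    {i : δ.ToType | ∀ ξ : (lam_ i).ord.ToType,
      lam ≤ #{α : lam.ord.ToType | ∀ ε : E, ξ < f (γ ε α) i}} ∈ D := by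
  by_cases hbot : ∅ ∈ D
  · exact Filter.mem_of_superset hbot (Set.empty_subset _)
  have hσ : σ ≤ #δ.ToType :=
    not_lt.1 fun h => hbot (Filter.empty_mem_of_mk_lt hDcomplete hDcobounded h)
  obtain ⟨i₀⟩ : Nonempty δ.ToType := mk_ne_zero_iff.1 (hE.trans_le hσ).ne_bot
  have hδ : #δ.ToType < lam := (hbetween i₀).1.trans (hbetween i₀).2
  have : ∀ i, Nonempty (lam_ i).ord.ToType := fun i =>
    Ordinal.nonempty_toType_iff.2 (ord_eq_zero.not.2 (hbetween i).1.ne_bot)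
  exact Filter.setOf_forall_le_mk_mem_of_cofinal hlamreg hδ ((hE.trans_le hσ).trans hδ) hE
    hDcomplete hfinc hfcof hγ

/-- Claim 3.1A: with `⟨f_α : α < λ⟩` `<_D`-increasing and cofinal in
    `∏ λ_i / D` for a σ-complete filter `D` containing the co-bounded sets,
    `λ` regular `> |δ|`, and indices `γ(ε,α) < λ` pairwise distinct in `α`
    for each fixed `ε < ε(*) < σ`, the set
    `B = {i < δ : (∀ ξ < λ_i)(∃^λ α)(g_α(i) > ξ)}` (where
    `g_α(i) = min_ε f_{γ(ε,α)}(i)`, i.e. `g_α(i) > ξ ↔ ∀ ε, f_{γ(ε,α)}(i) > ξ`)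
    belongs to `D`. -/
theorem stmt_7 (δ : Ordinal.{u}) (lam σ : Cardinal.{u})
    (hδ : Order.IsSuccLimit δ)
    (lam_ : δ.ToType → Cardinal.{u})
    (hinc : StrictMono lam_)
    (hregi : ∀ i, (lam_ i).IsRegular)
    (hbetween : ∀ i, #δ.ToType < lam_ i ∧ lam_ i < lam)
    (hlamreg : lam.IsRegular)
    (D : Filter δ.ToType) (hne : D.NeBot)
    (hDcomplete : ∀ S : Set (Set δ.ToType), #S < σ → (∀ A ∈ S, A ∈ D) → ⋂₀ S ∈ D)
    (hDcobounded : ∀ i : δ.ToType, {j | i < j} ∈ D)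
    (f : lam.ord.ToType → ∀ i : δ.ToType, (lam_ i).ord.ToType)
    (hfinc : ∀ α β, α < β → {i | f α i < f β i} ∈ D)
    (hfcof : ∀ g : ∀ i : δ.ToType, (lam_ i).ord.ToType, ∃ α, {i | g i < f α i} ∈ D)
    (E : Type u) (hE : #E < σ)
    (γ : E → lam.ord.ToType → lam.ord.ToType)
    (hγ : ∀ ε, Function.Injective (γ ε)) :
    {i : δ.ToType | ∀ ξ : (lam_ i).ord.ToType,
      lam ≤ #{α : lam.ord.ToType | ∀ ε : E, ξ < f (γ ε α) i}} ∈ D :=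
  stmt_7_general δ lam σ lam_ hbetween hlamreg D hDcomplete hDcobounded f hfinc hfcof E hE γ hγ
end

section
/- Suppose ⟨λ_i : i < i(*)⟩ is a strictly increasing sequence of regular cardinals, T_i ⊆ 2^{<λ_i} is a tree closed under initial segments with |T_i| < λ_{i+1} whenever i+1 < i(*), and B_i = {η ∈ 2^{λ_i} : every proper initial segment of η is in T_i} has cardinality ≥ μ, where μ is regular and μ > λ_i + |T_i| for each i. Then the sequence ⟨(B_i, <_lex) : i < i(*)⟩ of lexicographically ordered sets of branches is (μ, ℵ₀)-entangled. -/
open Cardinal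

universe u

/-- The lexicographic (strict) order on functions into `Bool`. -/
def LexLt {A : Type u} [LinearOrder A] (η ν : A → Bool) : Prop :=
  ∃ γ : A, (∀ x, x < γ → η x = ν x) ∧ η γ < ν γ

/-!
Restricted to the finitely many indices in play, one finds nodes `ν i` of the trees such that
`μ` many `α` leave every `ν i` with the value `s i`, and `μ` many with the value `!s i`, where `s`
marks the indices of `v`; any `α < β` from the two families are ordered as required.

The nodes are built by induction, adding the largest index `j` last. There is a branch `a` each
of whose initial segments is shared by `μ` many `α`, and since `#λ_j < μ`, cofinally many levels
`γ < λ_j` have `μ` many `α` splitting off from `a` at `γ`. The induction hypothesis gives nodes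
for the smaller indices at each such level; as the trees below `j` have fewer than
`λ_j = cof λ_j` nodes, two levels `γ₁ < γ₂` get the same ones. The node of `a` at `γ₁` then
works for `j`: splitting off at `γ₁` or at `γ₂` means taking opposite values at `γ₁`.
-/

theorem Cardinal.mk_pi_lt_of_finite {ι : Type u} [Finite ι] {α : ι → Type u} {c : Cardinal.{u}}
    (hc : ℵ₀ ≤ c) (h : ∀ i, #(α i) < c) : #(∀ i, α i) < c := by
  have := Fintype.ofFinite ι
  rw [mk_pi, prod_eq_of_fintype, lift_id]
  exact Finset.prod_induction _ (· < c) (fun _ _ => mul_lt_of_lt hc)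
    (one_lt_aleph0.trans_le hc) fun i _ => h i

theorem Cardinal.exists_mem_lt_of_le_mk {μ : Cardinal.{u}} (hμ : ℵ₀ ≤ μ) {S : Set μ.ord.ToType}
    (hS : μ ≤ #S) (α : μ.ord.ToType) : ∃ β ∈ S, α < β := by
  by_contra! h
  have hIic : #(Set.Iic α) < μ := by
    simpa using mk_Iic_lt α (by simp) (by simpa using hμ)
  exact (hS.trans (mk_le_mk_of_subset h)).not_gt hIic

theorem Cardinal.exists_lt_apply_eq_of_mk_lt {α β : Type u} [LinearOrder α] (g : α → β)
    (h : #β < #α) : ∃ x y, x < y ∧ g x = g y := by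
  obtain ⟨x, y, hxy, hne⟩ :=
    Function.not_injective_iff.mp fun hg => (mk_le_of_injective hg).not_gt h
  rcases hne.lt_or_gt with hlt | hlt
  · exact ⟨x, y, hlt, hxy⟩
  · exact ⟨y, x, hlt, hxy.symm⟩

theorem exists_forall_lt_eq_and_ne {L : Type u} [LinearOrder L] [WellFoundedLT L]
    {η η' : L → Bool} (h : η ≠ η') : ∃ γ, (∀ x < γ, η x = η' x) ∧ η γ ≠ η' γ := by
  obtain ⟨x, hx⟩ := Function.ne_iff.mp h
  obtain ⟨γ, hγ, hmin⟩ := wellFounded_lt.has_min {x | η x ≠ η' x} ⟨x, hx⟩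
  exact ⟨γ, fun y hy => not_not.mp fun hne => hmin y hne hy, hγ⟩

section Tree

variable {L : Type u} [LinearOrder L] {T : ∀ γ : L, Set ({x : L // x < γ} → Bool)}

def PassesThrough (η : L → Bool) (p : Σ γ : L, T γ) (b : Bool) : Prop :=
  (∀ x (hx : x < p.1), η x = p.2.1 ⟨x, hx⟩) ∧ η p.1 = b

def nodeAt (η : L → Bool) (γ : L) (h : (fun x : {x // x < γ} => η x) ∈ T γ) : Σ γ : L, T γ :=
  ⟨γ, _, h⟩

theorem lexLt_of_passesThrough {η η' : L → Bool} {p : Σ γ : L, T γ}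
    (h : PassesThrough η p false) (h' : PassesThrough η' p true) : LexLt η η' :=
  ⟨p.1, fun x hx => (h.1 x hx).trans (h'.1 x hx).symm, by rw [h.2, h'.2]; exact Bool.false_lt_true⟩

variable {κ : Type u} {f : κ → L → Bool} {S : Set κ} {μ : Cardinal.{u}}

def agreeBelow (f : κ → L → Bool) (S : Set κ) (a : κ) (γ : L) : Set κ :=
  {b ∈ S | ∀ x < γ, f b x = f a x}

def branchOff (f : κ → L → Bool) (S : Set κ) (a : κ) (γ : L) : Set κ :=
  {b ∈ agreeBelow f S a γ | f b γ = !f a γ}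

theorem branchOff_subset {a : κ} {γ : L} : branchOff f S a γ ⊆ S := fun _ hb => hb.1.1

theorem passesThrough_of_mem_branchOff {a b : κ} {γ : L} {h} (hb : b ∈ branchOff f S a γ) :
    PassesThrough (f b) (nodeAt (T := T) (f a) γ h) (!f a γ) :=
  ⟨hb.1.2, hb.2⟩

theorem passesThrough_of_mem_branchOff_of_lt {a b : κ} {γ γ' : L} {h}
    (hb : b ∈ branchOff f S a γ') (hγ : γ < γ') :
    PassesThrough (f b) (nodeAt (T := T) (f a) γ h) (f a γ) :=
  ⟨fun x hx => hb.1.2 x (hx.trans hγ), hb.1.2 γ hγ⟩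

theorem exists_forall_le_mk_agreeBelow (hμ : μ.IsRegular)
    (hT : ∀ a γ, (fun x : {x // x < γ} => f a x) ∈ T γ) (hTμ : #(Σ γ : L, T γ) < μ)
    (hS : μ ≤ #S) : ∃ a, ∀ γ, μ ≤ #(agreeBelow f S a γ) := by
  -- Otherwise each `a ∈ S` lies in a node with fewer than `μ` followers in `S`, and `S` is not
  -- the union of fewer than `μ` such sets.
  by_contra! h
  choose g hg using h
  let node : S → Σ γ : L, T γ := fun a => nodeAt (f a) (g a) (hT a (g a))
  obtain ⟨p, hp⟩ := infinite_pigeonhole_card node μ hS hμ.aleph0_le (by rwa [hμ.cof_ord])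
  have hfiber : ∀ a ∈ node ⁻¹' {p}, ∀ x (hx : x < p.1), f a x = p.2.1 ⟨x, hx⟩ := by
    rintro a rfl
    exact fun _ _ => rfl
  obtain ⟨a₀, ha₀⟩ : (node ⁻¹' {p}).Nonempty :=
    Set.nonempty_coe_sort.mp (mk_ne_zero_iff.mp (hμ.pos.trans_le hp).ne')
  have hsub : Subtype.val '' (node ⁻¹' {p}) ⊆ agreeBelow f S a₀ (g a₀) := by
    rintro _ ⟨a, ha, rfl⟩
    have hlev : p.1 = g a₀ := (congrArg Sigma.fst ha₀).symm
    refine ⟨a.2, fun x hx => ?_⟩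
    rw [← hlev] at hx
    rw [hfiber a ha x hx, hfiber a₀ ha₀ x hx]
  have := (mk_image_eq Subtype.val_injective).symm.trans_le (mk_le_mk_of_subset hsub)
  exact (hg a₀).not_ge (hp.trans this)

theorem isCofinal_branchOff [WellFoundedLT L] (hμ : μ.IsRegular) (hL : #L < μ)
    (hf : Function.Injective f) {a : κ} (ha : ∀ γ, μ ≤ #(agreeBelow f S a γ)) :
    IsCofinal {γ | μ ≤ #(branchOff f S a γ)} := by
  intro γ₀
  -- Otherwise the members of `agreeBelow f S a γ₀` other than `a`, sorted by the level where
  -- they leave `a`, are spread over fewer than `μ` levels, each taking fewer than `μ`.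
  by_contra! h
  set X := agreeBelow f S a γ₀ \ {a}
  have hX : μ ≤ #X := by
    by_contra! hX
    exact (ha γ₀).not_gt ((mk_le_mk_of_subset (Set.subset_insert_sdiff_singleton a _)).trans_lt
      (mk_insert_le.trans_lt (add_one_lt_of_lt hμ.aleph0_le hX)))
  have hsplit : ∀ b : X, ∃ γ, (∀ x < γ, f b x = f a x) ∧ f b γ ≠ f a γ := fun b =>
    exists_forall_lt_eq_and_ne (hf.ne b.2.2)
  choose D hDeq hDne using hsplit
  have hDge : ∀ b, γ₀ ≤ D b := fun b => not_lt.mp fun hlt => hDne b (b.2.1.2 _ hlt)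
  obtain ⟨γ, hγ⟩ := infinite_pigeonhole_card D μ hX hμ.aleph0_le (by rwa [hμ.cof_ord])
  obtain ⟨b₀, hb₀⟩ : (D ⁻¹' {γ}).Nonempty :=
    Set.nonempty_coe_sort.mp (mk_ne_zero_iff.mp (hμ.pos.trans_le hγ).ne')
  have hsub : Subtype.val '' (D ⁻¹' {γ}) ⊆ branchOff f S a γ := by
    rintro _ ⟨b, rfl, rfl⟩
    exact ⟨⟨b.2.1.1, hDeq b⟩, Bool.eq_not_iff.mpr (hDne b)⟩
  have := (mk_image_eq Subtype.val_injective).symm.trans_le (mk_le_mk_of_subset hsub)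
  exact (h γ (hγ.trans this)).not_ge ((hDge b₀).trans_eq hb₀)

end Tree

section Splitting

variable {ι κ : Type u} [LinearOrder ι] {L : ι → Type u} [∀ i, LinearOrder (L i)]
  {T : ∀ i, ∀ γ : L i, Set ({x : L i // x < γ} → Bool)} {t : ∀ i, κ → L i → Bool}

def passSet (t : ∀ i, κ → L i → Bool) (S : Set κ) (w : Finset ι) (ν : ∀ i, Σ γ : L i, T i γ)
    (c : ι → Bool) : Set κ :=
  {α ∈ S | ∀ i ∈ w, PassesThrough (t i α) (ν i) (c i)}

theorem passSet_subset_passSet_insert {S S' : Set κ} {w : Finset ι} {j : ι}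
    {ν ν' : ∀ i, Σ γ : L i, T i γ} {c : ι → Bool} (hS : S' ⊆ S) (hν : ∀ i ∈ w, ν' i = ν i)
    (hj : ∀ α ∈ S', PassesThrough (t j α) (ν j) (c j)) :
    passSet t S' w ν' c ⊆ passSet t S (insert j w) ν c := by
  rintro α ⟨hα, hw⟩
  refine ⟨hS hα, fun i hi => ?_⟩
  rcases Finset.mem_insert.mp hi with rfl | hi
  · exact hj α hα
  · exact hν i hi ▸ hw i hi

variable [∀ i, WellFoundedLT (L i)] {μ : Cardinal.{u}}

theorem exists_forall_le_mk_passSet (hμ : μ.IsRegular)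
    (hT : ∀ i α γ, (fun x : {x // x < γ} => t i α x) ∈ T i γ)
    (hinj : ∀ i, Function.Injective (t i))
    (hL : ∀ i, #(L i) < μ) (hTμ : ∀ i, #(Σ γ, T i γ) < μ) (hcof : ∀ i, ℵ₀ ≤ Order.cof (L i))
    (hTcof : ∀ i j, i < j → #(Σ γ, T i γ) < Order.cof (L j)) (s : ι → Bool) (w : Finset ι)
    {S : Set κ} (hS : μ ≤ #S) :
    ∃ ν : ∀ i, Σ γ : L i, T i γ, ∀ b, μ ≤ #(passSet t S w ν fun i => s i ^^ b) := by
  classical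
  induction w using Finset.induction_on_max generalizing S with
  | empty =>
    obtain ⟨α⟩ : Nonempty S := mk_ne_zero_iff.mp (hμ.pos.trans_le hS).ne'
    have (i : ι) : Nonempty (L i) :=
      Order.cof_ne_zero_iff.mp (aleph0_pos.trans_le (hcof i)).ne'
    refine ⟨fun i => nodeAt (t i α) (Classical.arbitrary _) (hT i α _), fun b => ?_⟩
    simpa [passSet] using hS
  | insert j w hlt IH =>
    obtain ⟨a, ha⟩ := exists_forall_le_mk_agreeBelow hμ (hT j) (hTμ j) hS
    have hcofinal := isCofinal_branchOff hμ (hL j) (hinj j) ha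
    choose Nu hNu using fun γ : {γ | μ ≤ #(branchOff (t j) S a γ)} => IH γ.2
    have hfew : #(∀ i : w, Σ γ, T i γ) < Order.cof (L j) :=
      mk_pi_lt_of_finite (hcof j) fun i => hTcof i j (hlt i i.2)
    obtain ⟨γ₁, γ₂, h12, hsame⟩ := exists_lt_apply_eq_of_mk_lt (fun γ (i : w) => Nu γ i)
      (hfew.trans_le (Order.cof_le hcofinal))
    have hagree (i) (hi : i ∈ w) : Nu γ₁ i = Nu γ₂ i := congrFun hsame ⟨i, hi⟩
    set ν := Function.update (Nu γ₁) j (nodeAt (t j a) γ₁ (hT j a γ₁))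
    have hνj : ν j = nodeAt (t j a) γ₁ (hT j a γ₁) := Function.update_self _ _ _
    have hνw (i) (hi : i ∈ w) : Nu γ₁ i = ν i :=
      (Function.update_of_ne (hlt i hi).ne _ _).symm
    refine ⟨ν, fun b => ?_⟩
    by_cases hb : (s j ^^ b) = t j a γ₁
    · refine (hNu γ₂ b).trans (mk_le_mk_of_subset (passSet_subset_passSet_insert branchOff_subset
        (fun i hi => (hagree i hi).symm.trans (hνw i hi)) fun α hα => ?_))
      rw [hνj, hb]
      exact passesThrough_of_mem_branchOff_of_lt hα h12
    · refine (hNu γ₁ b).trans (mk_le_mk_of_subset (passSet_subset_passSet_insert branchOff_subset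
        hνw fun α hα => ?_))
      rw [hνj, Bool.eq_not_iff.mpr hb]
      exact passesThrough_of_mem_branchOff hα

end Splitting

theorem exists_lt_lexLt_of_finite {ι : Type u} [LinearOrder ι] [Finite ι] {L : ι → Type u}
    [∀ i, LinearOrder (L i)] [∀ i, WellFoundedLT (L i)]
    {T : ∀ i, ∀ γ : L i, Set ({x : L i // x < γ} → Bool)} {μ : Cardinal.{u}}
    {t : ∀ i, μ.ord.ToType → L i → Bool} (hμ : μ.IsRegular)
    (hT : ∀ i α γ, (fun x : {x // x < γ} => t i α x) ∈ T i γ)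
    (hinj : ∀ i, Function.Injective (t i))
    (hL : ∀ i, #(L i) < μ) (hTμ : ∀ i, #(Σ γ, T i γ) < μ) (hcof : ∀ i, ℵ₀ ≤ Order.cof (L i))
    (hTcof : ∀ i j, i < j → #(Σ γ, T i γ) < Order.cof (L j)) (s : ι → Bool) :
    ∃ α β, α < β ∧ (∀ i, s i = false → LexLt (t i α) (t i β)) ∧
      (∀ i, s i = true → LexLt (t i β) (t i α)) := by
  have := Fintype.ofFinite ι
  obtain ⟨ν, hν⟩ := exists_forall_le_mk_passSet hμ hT hinj hL hTμ hcof hTcof s Finset.univ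
    (S := Set.univ) (by simp)
  obtain ⟨α, -, hα⟩ : (passSet t Set.univ Finset.univ ν fun i => s i ^^ false).Nonempty :=
    Set.nonempty_coe_sort.mp (mk_ne_zero_iff.mp (hμ.pos.trans_le (hν false)).ne')
  obtain ⟨β, ⟨-, hβ⟩, hαβ⟩ := exists_mem_lt_of_le_mk hμ.aleph0_le (hν true) α
  refine ⟨α, β, hαβ, fun i hi => ?_, fun i hi => ?_⟩
  · exact lexLt_of_passesThrough (by simpa [hi] using hα i (Finset.mem_univ i))
      (by simpa [hi] using hβ i (Finset.mem_univ i))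
  · exact lexLt_of_passesThrough (by simpa [hi] using hβ i (Finset.mem_univ i))
      (by simpa [hi] using hα i (Finset.mem_univ i))

theorem stmt_8_general (iStar : Ordinal.{u}) (μ : Cardinal.{u})
    (lam_ : iStar.ToType → Cardinal.{u})
    (hregi : ∀ i, (lam_ i).IsRegular)
    (T : ∀ i : iStar.ToType, ∀ γ : (lam_ i).ord.ToType,
      Set ({x : (lam_ i).ord.ToType // x < γ} → Bool))
    (hTsmall : ∀ i j, i < j →
      #(Σ γ : (lam_ i).ord.ToType, (T i γ : Set _)) < lam_ j)
    (hμreg : μ.IsRegular)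
    (hμbig : ∀ i, lam_ i + #(Σ γ : (lam_ i).ord.ToType, (T i γ : Set _)) < μ)
    (B : ∀ i : iStar.ToType, Set ((lam_ i).ord.ToType → Bool))
    (hB : ∀ i, B i = {η | ∀ γ, (fun x : {x : (lam_ i).ord.ToType // x < γ} =>
      η x.1) ∈ T i γ}) :
    ∀ (u v : Set iStar.ToType), Disjoint u v → (u ∪ v).Finite →
      ∀ t : (i : iStar.ToType) → μ.ord.ToType → ((lam_ i).ord.ToType → Bool),
        (∀ i ∈ u ∪ v, ∀ α, t i α ∈ B i) →
        (∀ i ∈ u ∪ v, Function.Injective (t i)) →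
        ∃ α β : μ.ord.ToType, α < β ∧
          (∀ i ∈ u, LexLt (t i α) (t i β)) ∧
          (∀ i ∈ v, LexLt (t i β) (t i α)) := by
  classical
  intro u v huv hfin t hmem hinj
  have := hfin.to_subtype
  have hcof (i) : Order.cof (lam_ i).ord.ToType = lam_ i := by
    rw [Ordinal.cof_toType, (hregi i).cof_ord]
  obtain ⟨α, β, hαβ, hu, hv⟩ := exists_lt_lexLt_of_finite (ι := ↥(u ∪ v))
    (T := fun i => T i) (t := fun i => t i) hμreg
    (fun i α => by simpa only [hB, Set.mem_ofPred_eq] using hmem i i.2 α) (fun i => hinj i i.2)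
    (fun i => (mk_ord_toType _).trans_lt (le_self_add.trans_lt (hμbig i)))
    (fun i => le_add_self.trans_lt (hμbig i)) (fun i => (hcof i).symm ▸ (hregi i).aleph0_le)
    (fun i j hij => (hcof j).symm ▸ hTsmall i j hij) fun i => decide (i.1 ∈ v)
  exact ⟨α, β, hαβ, fun i hi => hu ⟨i, .inl hi⟩ (by simpa using huv.notMem_of_mem_left hi),
    fun i hi => hv ⟨i, .inr hi⟩ (by simpa using hi)⟩

/-- Proposition 5.1: for a strictly increasing sequence of regular cardinals
    `λ_i`, trees `T_i ⊆ 2^{<λ_i}` closed under initial segments with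
    `|T_i| < λ_j` for `i < j`, whose branch sets `B_i` have cardinality `≥ μ`
    where `μ` is regular and `μ > λ_i + |T_i|`, the sequence
    `⟨(B_i, <_lex) : i < i(*)⟩` is (μ, ℵ₀)-entangled. -/
theorem stmt_8 (iStar : Ordinal.{u}) (μ : Cardinal.{u})
    (lam_ : iStar.ToType → Cardinal.{u})
    (hinc : StrictMono lam_)
    (hregi : ∀ i, (lam_ i).IsRegular)
    (T : ∀ i : iStar.ToType, ∀ γ : (lam_ i).ord.ToType,
      Set ({x : (lam_ i).ord.ToType // x < γ} → Bool))
    (hTclosed : ∀ i γ γ' (h : γ' < γ) (s : {x : (lam_ i).ord.ToType // x < γ} → Bool),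
      s ∈ T i γ → (fun x : {x : (lam_ i).ord.ToType // x < γ'} =>
        s ⟨x.1, lt_trans x.2 h⟩) ∈ T i γ')
    (hTsmall : ∀ i j, i < j →
      #(Σ γ : (lam_ i).ord.ToType, (T i γ : Set _)) < lam_ j)
    (hμreg : μ.IsRegular)
    (hμbig : ∀ i, lam_ i + #(Σ γ : (lam_ i).ord.ToType, (T i γ : Set _)) < μ)
    (B : ∀ i : iStar.ToType, Set ((lam_ i).ord.ToType → Bool))
    (hB : ∀ i, B i = {η | ∀ γ, (fun x : {x : (lam_ i).ord.ToType // x < γ} =>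
      η x.1) ∈ T i γ})
    (hBbig : ∀ i, μ ≤ #(B i)) :
    ∀ (u v : Set iStar.ToType), Disjoint u v → (u ∪ v).Finite →
      ∀ t : (i : iStar.ToType) → μ.ord.ToType → ((lam_ i).ord.ToType → Bool),
        (∀ i ∈ u ∪ v, ∀ α, t i α ∈ B i) →
        (∀ i ∈ u ∪ v, Function.Injective (t i)) →
        ∃ α β : μ.ord.ToType, α < β ∧
          (∀ i ∈ u, LexLt (t i α) (t i β)) ∧
          (∀ i ∈ v, LexLt (t i β) (t i α)) :=
  stmt_8_general iStar μ lam_ hregi T hTsmall hμreg hμbig B hB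
end

section
/- Assume D is an ultrafilter on κ, E is an ultrafilter on θ, and g_ε : κ → θ for ε < ε(*) satisfy: g_{ε₁} ≠ g_{ε₂} mod D for ε₁ < ε₂, and g_ε⁻¹[A] ∈ D for every ε < ε(*) and A ∈ E. Let I be a linear order of cardinality λ ≥ θ. Then there exist pairwise distinct elements f^α_ε/D of the ultrapower I^κ/D (for ε < ε(*), α < λ) such that for all α < β < λ, either f^α_ε/D < f^β_ε/D for all ε < ε(*), or f^β_ε/D < f^α_ε/D for all ε < ε(*). In particular, if ε(*) ≥ 2 then I^κ/D is not (λ,2)-entangled. -/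
open Cardinal Filter

universe u

/-! Fix an embedding `λ × θ ↪ I` (possible since `λ` is infinite whenever two of the `g_ε` differ
mod `D`) and put `f^α_ε(i) := (α, g_ε(i))`. For `α ≠ β` the ultrafilter `E` chooses whether
`(α, t) < (β, t)` or `(β, t) < (α, t)` for `E`-most `t`; since every `g_ε` pushes `D` forward
onto `E`, the same choice holds `D`-almost everywhere for every `ε` at once. -/

section CoherentFamily

variable {κ β ιε A I : Type*} [LinearOrder I] {D : Ultrafilter κ}

/-- `f ε α` represents the element `f^α_ε/D` of the ultrapower `I^κ/D`. -/
structure IsCoherentFamily (D : Ultrafilter κ) (f : ιε → A → κ → I) : Prop where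
  distinct : ∀ ε ε' α α', (ε, α) ≠ (ε', α') → ¬∀ᶠ i in D, f ε α i = f ε' α' i
  lt_or_gt : ∀ α α', α ≠ α' →
    (∀ ε, ∀ᶠ i in D, f ε α i < f ε α' i) ∨ ∀ ε, ∀ᶠ i in D, f ε α' i < f ε α i

theorem Ultrafilter.eventually_lt_or_eventually_gt (E : Ultrafilter β) {u v : β → I}
    (h : ∀ t, u t ≠ v t) : (∀ᶠ t in E, u t < v t) ∨ ∀ᶠ t in E, v t < u t :=
  Ultrafilter.eventually_or.1 (.of_forall fun t => (h t).lt_or_gt)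

theorem isCoherentFamily_of_embedding {E : Ultrafilter β} {G : ιε → κ → β}
    (hG_ne : ∀ ε ε', ε ≠ ε' → ¬∀ᶠ i in D, G ε i = G ε' i)
    (hG_tendsto : ∀ ε, Tendsto (G ε) D E) (e : A × β ↪ I) :
    IsCoherentFamily D fun ε α i => e (α, G ε i) where
  distinct ε ε' α α' hne hD := by
    simp only [e.injective.eq_iff, Prod.mk.injEq] at hD
    obtain rfl : α = α' := hD.exists.elim fun _ hi => hi.1
    exact hG_ne ε ε' (by rintro rfl; exact hne rfl) (hD.mono fun _ hi => hi.2)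
  lt_or_gt α α' hne :=
    (E.eventually_lt_or_eventually_gt fun t h => hne (Prod.ext_iff.1 (e.injective h)).1).imp
      (fun h ε => (hG_tendsto ε).eventually h) (fun h ε => (hG_tendsto ε).eventually h)

theorem IsCoherentFamily.exists_not_entangled {f : ιε → A → κ → I}
    (hf : IsCoherentFamily D f) (h2 : 2 ≤ #ιε) :
    ∃ t : Fin 2 → A → κ → I,
      (∀ (e : Fin 2) (α α' : A), α ≠ α' → ¬∀ᶠ i in D, t e α i = t e α' i) ∧
      ¬∃ α α' : A, α ≠ α' ∧ (∀ᶠ i in D, t 0 α i < t 0 α' i) ∧ ∀ᶠ i in D, t 1 α' i < t 1 α i := by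
  obtain ⟨ε₀, ε₁, -⟩ := two_le_iff.1 h2
  refine ⟨![f ε₀, f ε₁], fun e α α' hne => ?_, fun ⟨α, α', hne, h0, h1⟩ => ?_⟩
  · fin_cases e <;> exact hf.distinct _ _ α α' (by simp [hne])
  · rcases hf.lt_or_gt α α' hne with h | h
    · obtain ⟨i, hlt, hgt⟩ := ((h ε₁).and h1).exists
      exact lt_asymm hlt hgt
    · obtain ⟨i, hlt, hgt⟩ := ((h ε₀).and h0).exists
      exact lt_asymm hlt hgt

end CoherentFamily

theorem infinite_of_tendsto_of_not_eventuallyEq {κ β : Type*} {D : Ultrafilter κ}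
    {E : Ultrafilter β} {g₁ g₂ : κ → β} (h₁ : Tendsto g₁ D E) (h₂ : Tendsto g₂ D E)
    (hne : ¬∀ᶠ i in D, g₁ i = g₂ i) : Infinite β := by
  by_contra hfin
  have : Finite β := not_infinite_iff_finite.1 hfin
  obtain ⟨t, rfl⟩ := E.eq_pure_of_finite
  rw [Ultrafilter.coe_pure, tendsto_pure] at h₁ h₂
  exact hne ((h₁.and h₂).mono fun _ hi => hi.1.trans hi.2.symm)

theorem nonempty_prod_embedding {A β I : Type u} (hA : ℵ₀ ≤ #A) (hβ : #β ≤ #A)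
    (hI : #A ≤ #I) : Nonempty (A × β ↪ I) := by
  rw [← Cardinal.le_def, mk_prod, lift_id, lift_id]
  calc #A * #β ≤ #A * #A := mul_le_mul_right hβ _
    _ = #A := mul_eq_self hA
    _ ≤ #I := hI

/-- Proposition 6.1: given ultrafilters `D` on `κ`, `E` on `θ`, and functions
    `g_ε : κ → θ` pairwise distinct mod `D` with `g_ε⁻¹[A] ∈ D` for all `A ∈ E`,
    and a linear order `I` of cardinality `λ ≥ θ`, there are pairwise distinct
    elements `f^α_ε/D` of `I^κ/D` such that for `α < β` either all coordinates
    increase or all decrease. In particular, if `ε(*) ≥ 2` then `I^κ/D` is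
    not (λ,2)-entangled. -/
theorem stmt_9 (κ θ : Type u) (D : Ultrafilter κ) (E : Ultrafilter θ)
    (lam : Cardinal.{u}) (ιε : Type u)
    (g : ιε → κ → θ)
    (hg1 : ∀ ε₁ ε₂ : ιε, ε₁ ≠ ε₂ → {i | g ε₁ i = g ε₂ i} ∉ D)
    (hg2 : ∀ (ε : ιε) (A : Set θ), A ∈ E → g ε ⁻¹' A ∈ D)
    (I : Type u) [LinearOrder I] (hI : #I = lam) (hθ : #θ ≤ lam) :
    ∃ f : ιε → lam.ord.ToType → κ → I,
      (∀ (ε ε' : ιε) (α α' : lam.ord.ToType), (ε, α) ≠ (ε', α') →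
        {i | f ε α i = f ε' α' i} ∉ D) ∧
      (∀ α β, α < β →
        (∀ ε, {i | f ε α i < f ε β i} ∈ D) ∨
        (∀ ε, {i | f ε β i < f ε α i} ∈ D)) ∧
      (2 ≤ #ιε →
        ∃ t : Fin 2 → lam.ord.ToType → κ → I,
          (∀ (e : Fin 2) (α β : lam.ord.ToType), α ≠ β →
            {i | t e α i = t e β i} ∉ D) ∧
          ¬∃ α β : lam.ord.ToType, α < β ∧
            {i | t 0 α i < t 0 β i} ∈ D ∧ {i | t 1 β i < t 1 α i} ∈ D) := by
  have hg : ∀ ε, Tendsto (g ε) D E := fun ε => tendsto_def.2 (hg2 ε)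
  obtain ⟨f, hf⟩ : ∃ f : ιε → lam.ord.ToType → κ → I, IsCoherentFamily D f := by
    rcases subsingleton_or_nontrivial ιε with hι | ⟨ε₁, ε₂, hne⟩
    · obtain ⟨c⟩ : Nonempty (lam.ord.ToType ↪ I) := by rw [← Cardinal.le_def, mk_ord_toType, hI]
      exact ⟨_, isCoherentFamily_of_embedding (G := fun _ _ => PUnit.unit.{u + 1})
        (E := pure PUnit.unit) (fun ε ε' hne => (hne (Subsingleton.elim ε ε')).elim)
        (fun _ => tendsto_pure.2 (.of_forall fun _ => rfl))
        ((Equiv.prodPUnit _).toEmbedding.trans c)⟩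
    · have : Infinite θ := infinite_of_tendsto_of_not_eventuallyEq (hg ε₁) (hg ε₂) (hg1 ε₁ ε₂ hne)
      obtain ⟨e⟩ : Nonempty (lam.ord.ToType × θ ↪ I) := nonempty_prod_embedding
        (by rw [mk_ord_toType]; exact (aleph0_le_mk θ).trans hθ)
        (by rwa [mk_ord_toType]) (by rw [mk_ord_toType, hI])
      exact ⟨_, isCoherentFamily_of_embedding hg1 hg e⟩
  refine ⟨f, hf.distinct, fun α β hlt => hf.lt_or_gt α β hlt.ne, fun h2 => ?_⟩
  obtain ⟨t, ht_distinct, ht_not_entangled⟩ := hf.exists_not_entangled h2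
  exact ⟨t, ht_distinct, fun ⟨α, β, hlt, h0, h1⟩ => ht_not_entangled ⟨α, β, hlt.ne, h0, h1⟩⟩
end

section
/- Suppose κ < σ < λ are regular cardinals with θ^{<σ} < λ for all θ < λ, and D is an ultrafilter on κ. If I is a positively σ-entangled linear order of cardinality λ, then the ultrapower I^κ/D is positively σ-entangled. -/
/-!
Choose representatives `F e a : κ → I` of the germs `t e a`. Every coordinate `(e, i)` with
`e ∈ E`, `i < κ` gives a `λ`-sequence `a ↦ F e a i` in `I ≅ λ`, and there are fewer than `σ`
coordinates. A pressing-down argument at a point of cofinality `σ` bounds the regressive values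
on an unbounded set, and `θ^{<σ} < λ` lets a pigeonhole over the patterns of small values make
every coordinate either constant or increasing along a subsequence (a Δ-system). The increasing
coordinates of a fixed `e` form a `D`-large set, as `t e` is injective, so entangling `I` along the
increasing coordinates and reading the result modulo `D` entangles the ultrapower.
-/

open Cardinal

universe u

/-- `X` is positively σ-entangled. -/
def PosEnt (σ : Cardinal.{u}) (X : Type u) [LinearOrder X] : Prop :=
  ∀ (E : Type u), #E < 1 + σ → ∀ u : Set E, (u = ∅ ∨ u = Set.univ) →
    ∀ t : E → (#X).ord.ToType → X, (∀ e, Function.Injective (t e)) →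
      ∃ α β, α < β ∧ ∀ e : E, e ∈ u ↔ t e α < t e β

open Ordinal Set

section UnboundedIn

variable {lam σ : Cardinal.{u}}

def UnboundedIn (o : Ordinal.{u}) (S : Set Ordinal.{u}) : Prop :=
  ∀ b < o, ∃ δ ∈ S, b ≤ δ ∧ δ < o

theorem iSup_Iio_add_one_lt_ord (hlam : lam.IsRegular) {ξ : Ordinal.{u}} (hξ : ξ < lam.ord)
    {f : Iio ξ → Ordinal.{u}} (hf : ∀ ζ, f ζ < lam.ord) : ⨆ ζ, f ζ + 1 < lam.ord := by
  refine lift_iSup_add_one_lt_of_lt_cof ?_ hf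
  rw [Cardinal.mk_Iio_ordinal, Cardinal.lift_lift, ← lift_cof, hlam.cof_ord, Cardinal.lift_lt]
  exact Cardinal.lt_ord.mp hξ

theorem UnboundedIn.exists_seq (hlam : lam.IsRegular) {S : Set Ordinal.{u}}
    (hS : UnboundedIn lam.ord S) (q : Ordinal.{u} → Ordinal.{u})
    (hq : ∀ δ < lam.ord, q δ < lam.ord) :
    ∃ N : Ordinal.{u} → Ordinal.{u}, (∀ ξ < lam.ord, N ξ ∈ S ∧ N ξ < lam.ord) ∧
      ∀ ξ ζ, ξ < ζ → ζ < lam.ord → N ξ < N ζ ∧ q (N ξ) < N ζ := by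
  have hpick : ∀ b, ∃ δ, b < lam.ord → δ ∈ S ∧ b ≤ δ ∧ δ < lam.ord := fun b =>
    if hb : b < lam.ord then (hS b hb).imp fun _ h _ => h else ⟨0, fun h => absurd h hb⟩
  choose pick hpick using hpick
  let g δ := max δ (q δ)
  obtain ⟨N, hN⟩ : ∃ N : Ordinal.{u} → Ordinal.{u},
      ∀ ξ, N ξ = pick (⨆ ζ : Iio ξ, g (N ζ) + 1) :=
    ⟨lt_wf.fix fun ξ IH => pick (⨆ ζ : Iio ξ, g (IH ζ ζ.2) + 1), fun ξ => lt_wf.fix_eq _ ξ⟩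
  have hNS : ∀ ξ < lam.ord,
      N ξ ∈ S ∧ ⨆ ζ : Iio ξ, g (N ζ) + 1 ≤ N ξ ∧ N ξ < lam.ord := by
    intro ξ hξ
    induction ξ using WellFoundedLT.induction with
    | _ ξ IH =>
      rw [hN ξ]
      refine hpick _ (iSup_Iio_add_one_lt_ord hlam hξ fun ζ => ?_)
      have hζ := (IH ζ ζ.2 (ζ.2.trans hξ)).2.2
      exact max_lt hζ (hq _ hζ)
  refine ⟨N, fun ξ hξ => ⟨(hNS ξ hξ).1, (hNS ξ hξ).2.2⟩, fun ξ ζ hξζ hζ => ?_⟩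
  have hgN : g (N ξ) < N ζ := calc
    g (N ξ) < g (N ξ) + 1 := Order.lt_add_one_iff.mpr le_rfl
    _ ≤ ⨆ ζ' : Iio ζ, g (N ζ') + 1 := Ordinal.le_iSup (fun ζ' : Iio ζ => g (N ζ') + 1) ⟨ξ, hξζ⟩
    _ ≤ N ζ := (hNS ζ hζ).2.1
  exact max_lt_iff.mp hgN

theorem exists_unboundedIn_regressive_le (hlam : lam.IsRegular) (hσ : σ.IsRegular)
    (hσlam : σ < lam) {C : Type u} (hC : #C < σ) (W : C → Ordinal.{u} → Ordinal.{u}) :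
    ∃ η < lam.ord, UnboundedIn lam.ord {δ | ∀ c, W c δ < δ → W c δ ≤ η} := by
  by_contra! hcon
  have hbd : ∀ η < lam.ord, ∃ b < lam.ord,
      ∀ δ, (∀ c, W c δ < δ → W c δ ≤ η) → b ≤ δ → lam.ord ≤ δ := by
    intro η hη
    simpa [UnboundedIn] using hcon η hη
  choose! bd hbd using hbd
  obtain ⟨N, hNlt, hN⟩ := UnboundedIn.exists_seq hlam (S := univ)
    (fun b hb => ⟨b, trivial, le_rfl, hb⟩) bd fun η hη => (hbd η hη).1
  have hσlam' : ∀ ξ < σ.ord, ξ < lam.ord := fun ξ hξ =>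
    hξ.trans_le (Cardinal.ord_le_ord.mpr hσlam.le)
  have hσlim := Cardinal.isSuccLimit_ord hσ.aleph0_le
  have hNle : ∀ ξ ζ, ξ ≤ ζ → ζ < lam.ord → N ξ ≤ N ζ := fun ξ ζ h hζ =>
    h.eq_or_lt.elim (fun h => h ▸ le_rfl) fun h => (hN ξ ζ h hζ).1.le
  set δ := ⨆ ξ : Iio σ.ord, N ξ
  have hδ : δ < lam.ord := (iSup_le_iSup_add_one _).trans_lt <|
    iSup_Iio_add_one_lt_ord hlam (Cardinal.ord_lt_ord.mpr hσlam) fun ξ =>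
      (hNlt ξ (hσlam' ξ ξ.2)).2
  -- `cof δ = σ > #C`, so the regressive values at `δ` all lie below a single `N ξs`
  have hcatch : ∀ c, ∃ ξ : Iio σ.ord, W c δ < δ → W c δ < N ξ := fun c =>
    if h : W c δ < δ then (Ordinal.lt_iSup_iff.mp h).imp fun _ h' _ => h'
    else ⟨⟨0, hσlim.bot_lt⟩, fun h' => absurd h' h⟩
  choose ξc hξc using hcatch
  set ξs := ⨆ c, (ξc c : Ordinal.{u})
  have hξs : ξs < σ.ord := iSup_lt_of_lt_cof (by rwa [hσ.cof_ord]) fun c => (ξc c).2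
  refine ((hbd (N ξs) (hNlt ξs (hσlam' ξs hξs)).2).2 δ (fun c hc => ?_) ?_).not_gt hδ
  · exact ((hξc c hc).trans_le (hNle _ _ (Ordinal.le_iSup _ c) (hσlam' ξs hξs))).le
  · calc bd (N ξs) ≤ N (Order.succ ξs) :=
          (hN _ _ (Order.lt_succ ξs) (hσlam' _ (hσlim.succ_lt hξs))).2.le
      _ ≤ δ := Ordinal.le_iSup (fun ξ : Iio σ.ord => N ξ) ⟨_, hσlim.succ_lt hξs⟩

theorem UnboundedIn.exists_fiber (hlam : lam.IsRegular) {S : Set Ordinal.{u}}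
    (hS : UnboundedIn lam.ord S) {P : Type u} (hP : #P < lam) (f : Ordinal.{u} → P) :
    ∃ p, UnboundedIn lam.ord (S ∩ f ⁻¹' {p}) := by
  by_contra! hcon
  have hbd : ∀ p, ∃ b < lam.ord, ∀ δ ∈ S, f δ = p → b ≤ δ → lam.ord ≤ δ := by
    intro p
    simpa [UnboundedIn] using hcon p
  choose bd hbd using hbd
  obtain ⟨δ, hδS, hbδ, hδ⟩ :=
    hS (⨆ p, bd p) (iSup_lt_of_lt_cof (by rwa [hlam.cof_ord]) fun p => (hbd p).1)
  exact ((hbd (f δ)).2 δ hδS rfl ((Ordinal.le_iSup bd _).trans hbδ)).not_gt hδ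

theorem exists_unboundedIn_root (hlam : lam.IsRegular) (hσ : σ.IsRegular) (hσlam : σ < lam)
    (hpow : ∀ θ < lam, θ ^< σ < lam) {C : Type u} (hC : #C < σ)
    (W : C → Ordinal.{u} → Ordinal.{u}) :
    ∃ S, UnboundedIn lam.ord S ∧ ∃ (K : Set C) (v : C → Ordinal.{u}),
      ∀ δ ∈ S, ∀ c, (c ∈ K → W c δ = v c) ∧ (c ∉ K → δ ≤ W c δ) := by
  obtain ⟨η, hη, hreg⟩ := exists_unboundedIn_regressive_le hlam hσ hσlam hC W
  have hlim := Cardinal.isSuccLimit_ord hlam.aleph0_le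
  set o := Order.succ (Order.succ η)
  -- the pattern of `δ` records every value `W c δ ≤ η` and collapses the others to `succ η`
  let pat : Ordinal.{u} → C → o.ToType := fun δ c =>
    ToType.mk ⟨min (W c δ) (Order.succ η),
      mem_Iio.mpr ((min_le_right _ _).trans_lt (Order.lt_succ _))⟩
  have hP : #(C → o.ToType) < lam := calc
    #(C → o.ToType) = #o.ToType ^ #C := (Cardinal.power_def _ _).symm
    _ ≤ #o.ToType ^< σ := Cardinal.le_powerlt _ hC
    _ < lam := hpow _ <| by
      rw [Cardinal.mk_toType]; exact Cardinal.lt_ord.mp (hlim.succ_lt (hlim.succ_lt hη))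
  obtain ⟨p, hp⟩ := hreg.exists_fiber hlam hP pat
  let v c := (ToType.mk.symm (p c)).1
  refine ⟨_, hp, {c | v c ≤ η}, v, fun δ ⟨hδreg, hδp⟩ c => ?_⟩
  have hv : min (W c δ) (Order.succ η) = v c := by
    simp only [v, ← (Set.mem_singleton_iff.mp hδp : pat δ = p), pat, OrderIso.symm_apply_apply]
  constructor
  · intro (hc : v c ≤ η)
    have hWη : W c δ ≤ η := by
      rw [← hv, min_le_iff] at hc
      exact hc.resolve_right (Order.lt_succ η).not_ge
    rw [← hv, min_eq_left (hWη.trans (Order.le_succ η))]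
  · intro (hc : ¬v c ≤ η)
    by_contra! h
    exact hc (hv ▸ (min_le_left _ _).trans (hδreg c h))

theorem exists_strictMono_const_or_injective (hlam : lam.IsRegular) (hσ : σ.IsRegular)
    (hσlam : σ < lam) (hpow : ∀ θ < lam, θ ^< σ < lam) {C X : Type u} (hC : #C < σ)
    (hX : #X ≤ lam) (W : C → lam.ord.ToType → X) :
    ∃ N : lam.ord.ToType → lam.ord.ToType, StrictMono N ∧ ∃ K : Set C,
      (∀ c ∈ K, ∀ a b, W c (N a) = W c (N b)) ∧ ∀ c ∉ K, Function.Injective fun a => W c (N a) := by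
  obtain ⟨ι⟩ : Nonempty (X ↪ lam.ord.ToType) := by
    rwa [← Cardinal.le_def, Cardinal.mk_ord_toType]
  let e : Iio lam.ord ≃o lam.ord.ToType := ToType.mk
  let rank : X → Ordinal.{u} := fun x => (e.symm (ι x)).1
  have hrank : ∀ x, rank x < lam.ord := fun x => (e.symm (ι x)).2
  have hrank_inj : Function.Injective rank := fun x y h =>
    ι.injective (e.symm.injective (Subtype.ext h))
  let W' : C → Ordinal.{u} → Ordinal.{u} := fun c δ =>
    if h : δ < lam.ord then rank (W c (e ⟨δ, h⟩)) else 0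
  obtain ⟨S, hS, K, v, hroot⟩ := exists_unboundedIn_root hlam hσ hσlam hpow hC W'
  obtain ⟨N, hNS, hN⟩ := hS.exists_seq hlam (fun δ => ⨆ c, W' c δ) fun δ hδ =>
    iSup_lt_of_lt_cof (by rw [hlam.cof_ord]; exact hC.trans hσlam) fun c => by
      simp only [W', dif_pos hδ, hrank]
  let N' : lam.ord.ToType → lam.ord.ToType := fun a => e ⟨N (e.symm a), (hNS _ (e.symm a).2).2⟩
  have hW' : ∀ c a, W' c (N (e.symm a)) = rank (W c (N' a)) := fun c a =>
    dif_pos (hNS _ (e.symm a).2).2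
  refine ⟨N', fun a b hab => e.lt_iff_lt.mpr (hN _ _ (e.symm.lt_iff_lt.mpr hab) (e.symm b).2).1,
    K, fun c hc a b => hrank_inj ?_, fun c hc => ?_⟩
  · rw [← hW', ← hW', (hroot _ (hNS _ (e.symm a).2).1 c).1 hc,
      (hroot _ (hNS _ (e.symm b).2).1 c).1 hc]
  · refine Function.Injective.of_comp (f := rank) (StrictMono.injective fun a b hab => ?_)
    simp only [Function.comp_apply, ← hW']
    calc W' c (N (e.symm a)) ≤ ⨆ c, W' c (N (e.symm a)) := Ordinal.le_iSup _ c
      _ < N (e.symm b) := (hN _ _ (e.symm.lt_iff_lt.mpr hab) (e.symm b).2).2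
      _ ≤ W' c (N (e.symm b)) := (hroot _ (hNS _ (e.symm b).2).1 c).2 hc

end UnboundedIn

namespace Filter.Germ

variable {γ β : Type*} {D : Ultrafilter γ}

theorem iff_coe_lt_of_eqOn_compl [Preorder β] {f g : γ → β} {U : Set γ} (hU : U ∈ D)
    (hfg : EqOn f g Uᶜ) {P : Prop} (hP : ∀ i ∈ U, P ↔ f i < g i) :
    P ↔ (f : (D : Filter γ).Germ β) < g := by
  rw [coe_lt]
  by_cases h : P
  · simpa [h] using eventually_of_mem hU fun i hi => (hP i hi).mp h
  · simp only [h, false_iff]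
    intro hlt
    obtain ⟨i, hi⟩ := hlt.exists
    by_cases hiU : i ∈ U
    · exact h ((hP i hiU).mpr hi)
    · exact (hfg hiU ▸ hi).false

theorem mem_of_injective_of_eqOn_compl {α : Type*} [Nontrivial α] {F : α → γ → β}
    (hF : Function.Injective fun a => (F a : (D : Filter γ).Germ β)) {U : Set γ}
    (hU : ∀ a b, EqOn (F a) (F b) Uᶜ) : U ∈ D := by
  by_contra hU'
  obtain ⟨a, b, hne⟩ := exists_pair_ne α
  exact hne (hF (coe_eq.mpr (eventually_of_mem (Ultrafilter.compl_mem_iff_notMem.mpr hU')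
    fun _ hi => hU a b hi)))

end Filter.Germ

theorem posEnt_iff {σ : Cardinal.{u}} {X : Type u} [LinearOrder X] :
    PosEnt σ X ↔ ∀ E : Type u, #E < 1 + σ → ∀ (P : Prop) (t : E → (#X).ord.ToType → X),
      (∀ e, Function.Injective (t e)) → ∃ α β, α < β ∧ ∀ e, (P ↔ t e α < t e β) := by
  constructor
  · intro h E hE P t ht
    exact h E hE {_e | P} ((em P).symm.imp (fun hP => by simp [hP]) fun hP => by simp [hP]) t ht
  · rintro h E hE u (rfl | rfl) t ht
    · simpa using h E hE False t ht
    · simpa using h E hE True t ht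

theorem exists_lt_forall_iff_germ_lt {σ : Cardinal.{u}} {I γ E : Type u} [LinearOrder I]
    (hσ : σ.IsRegular) (hlam : (#I).IsRegular) (hσlam : σ < #I)
    (hpow : ∀ θ < #I, θ ^< σ < #I) (hent : PosEnt σ I) (D : Ultrafilter γ) (hγ : #γ < σ)
    (hE : #E < σ) (P : Prop) (F : E → (#I).ord.ToType → γ → I)
    (hF : ∀ e, Function.Injective fun a => (F e a : (D : Filter γ).Germ I)) :
    ∃ a b, a < b ∧ ∀ e, (P ↔ (F e a : (D : Filter γ).Germ I) < F e b) := by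
  have hC : #(E × γ) < σ := by
    rw [mk_prod, Cardinal.lift_id, Cardinal.lift_id]
    exact mul_lt_of_lt hσ.aleph0_le hE hγ
  obtain ⟨N, hN, K, hK, hKc⟩ :=
    exists_strictMono_const_or_injective hlam hσ hσlam hpow hC le_rfl fun c a => F c.1 a c.2
  have : Nontrivial (#I).ord.ToType := one_lt_iff_nontrivial.mp <| by
    rw [mk_ord_toType]; exact one_lt_aleph0.trans_le hlam.aleph0_le
  have hlarge : ∀ e, {i | (e, i) ∉ K} ∈ D := fun e =>
    Filter.Germ.mem_of_injective_of_eqOn_compl (F := fun a => F e (N a))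
      ((hF e).comp hN.injective) fun a b i hi => hK (e, i) (not_not.mp hi) a b
  obtain ⟨a, b, hab, hP⟩ := posEnt_iff.mp hent {c // c ∉ K}
    ((mk_subtype_le _).trans_lt hC |>.trans_le le_add_self) P
    (fun c a => F c.1.1 (N a) c.1.2) fun c => hKc c.1 c.2
  exact ⟨N a, N b, hN hab, fun e => Filter.Germ.iff_coe_lt_of_eqOn_compl (hlarge e)
    (fun i hi => hK (e, i) (not_not.mp hi) a b) fun i hi => hP ⟨(e, i), hi⟩⟩

theorem stmt_10_general (κ σ lam : Cardinal.{u})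
    (hσ : σ.IsRegular) (hlam : lam.IsRegular)
    (hκσ : κ < σ) (hσlam : σ < lam)
    (hpow : ∀ θ < lam, θ ^< σ < lam)
    (D : Ultrafilter κ.ord.ToType)
    (I : Type u) [LinearOrder I] (hI : #I = lam)
    (hent : PosEnt σ I) :
    PosEnt σ (Filter.Germ (D : Filter κ.ord.ToType) I) := by
  subst hI
  rw [posEnt_iff]
  intro E hE P t ht
  rw [add_eq_right hσ.aleph0_le (one_le_aleph0.trans hσ.aleph0_le)] at hE
  obtain ⟨j⟩ : Nonempty ((#I).ord.ToType ≤i (#((D : Filter κ.ord.ToType).Germ I)).ord.ToType) :=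
    type_le_iff.mp <| by
      rw [type_toType, type_toType]
      exact ord_le_ord.mpr (mk_le_of_injective fun _ _ => Filter.Germ.const_inj.mp)
  have hrep : ∀ e a, ∃ f : κ.ord.ToType → I, (f : (D : Filter κ.ord.ToType).Germ I) = t e (j a) :=
    fun e a => Filter.Germ.inductionOn (t e (j a)) fun f => ⟨f, rfl⟩
  choose F hF using hrep
  obtain ⟨a, b, hab, hP⟩ := exists_lt_forall_iff_germ_lt hσ hlam hσlam hpow hent D
    (by rwa [mk_ord_toType]) hE P F fun e a b h => j.inj.mp (ht e (by simpa only [hF] using h))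
  exact ⟨j a, j b, j.strictMono hab, fun e => by simpa only [hF] using hP e⟩

/-- Proposition 6.5: for regular `κ < σ < λ` with `θ^{<σ} < λ` for all `θ < λ`
    and an ultrafilter `D` on `κ`, the ultrapower of a positively σ-entangled
    linear order of cardinality λ is positively σ-entangled. -/
theorem stmt_10 (κ σ lam : Cardinal.{u})
    (hκ : κ.IsRegular) (hσ : σ.IsRegular) (hlam : lam.IsRegular)
    (hκσ : κ < σ) (hσlam : σ < lam)
    (hpow : ∀ θ < lam, θ ^< σ < lam)
    (D : Ultrafilter κ.ord.ToType)
    (I : Type u) [LinearOrder I] (hI : #I = lam)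
    (hent : PosEnt σ I) :
    PosEnt σ (Filter.Germ (D : Filter κ.ord.ToType) I) :=
  stmt_10_general κ σ lam hσ hlam hκσ hσlam hpow D I hI hent
end

section
/- If D is a separative ultrafilter on κ, n < ω, and ᾱ^ℓ ∈ κ^κ for ℓ < n satisfy ᾱ^{ℓ₀}/D ≠ ᾱ^{ℓ₁}/D for ℓ₀ < ℓ₁ < n, then there is A ∈ D such that the sets {α^ℓ_i : i ∈ A} for ℓ < n are pairwise disjoint. -/
open Cardinal

universe u

/-- An ultrafilter `D` on `κ` is separative if any two functions `κ → κ`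
    which differ everywhere have disjoint images on some set in `D`. -/
def Separative {κ : Type u} (D : Ultrafilter κ) : Prop :=
  ∀ a b : κ → κ, (∀ i, a i ≠ b i) → ∃ A ∈ D, (a '' A) ∩ (b '' A) = ∅

open Filter Set

/-- Separativeness only asks for `a` and `b` to differ everywhere, but differing `D`-almost
everywhere suffices: redefine `b` on the null set where `a = b` so that it differs from `a`
there too, and then discard that set. -/
theorem Separative.eventually_disjoint_image {κ : Type u} {D : Ultrafilter κ} (hD : Separative D)
    {a b : κ → κ} (hab : {i | a i = b i} ∉ D) :
    ∀ᶠ A in (D : Filter κ).smallSets, Disjoint (a '' A) (b '' A) := by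
  classical
  obtain ⟨i₀, hi₀⟩ : ∃ i, a i ≠ b i := by
    by_contra! h
    exact hab ((eq_univ_of_forall h : {i | a i = b i} = Set.univ) ▸ univ_mem)
  have : Nontrivial κ := nontrivial_of_ne _ _ hi₀
  choose c hc using fun i => exists_ne (a i)
  set b' : κ → κ := fun i => if a i = b i then c i else b i
  have hab' : ∀ i, a i ≠ b' i := fun i => by
    simp only [b']
    split_ifs with h
    exacts [(hc i).symm, h]
  obtain ⟨A, hA, hdisj⟩ := hD a b' hab'
  have hC : {i | a i = b i}ᶜ ∈ D := Ultrafilter.compl_mem_iff_notMem.2 hab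
  have hEq : EqOn b b' (A ∩ {i | a i = b i}ᶜ) := fun i hi => by
    simp [b', show ¬a i = b i from hi.2]
  refine eventually_smallSets.2 ⟨A ∩ {i | a i = b i}ᶜ, inter_mem hA hC, fun t ht => ?_⟩
  refine (Set.disjoint_iff_inter_eq_empty.2 hdisj).mono
    (image_mono (ht.trans inter_subset_left)) ?_
  rw [(hEq.mono ht).image_eq]
  exact image_mono (ht.trans inter_subset_left)

/-- Proposition 6.7: if `D` is separative and `ᾱ^ℓ` (ℓ < n) are pairwise
    distinct mod `D`, then on some `A ∈ D` the images `{α^ℓ_i : i ∈ A}` are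
    pairwise disjoint. -/
theorem stmt_11 {κ : Type u} (D : Ultrafilter κ) (hD : Separative D)
    (n : ℕ) (a : Fin n → κ → κ)
    (ha : ∀ ℓ₀ ℓ₁ : Fin n, ℓ₀ < ℓ₁ → {i | a ℓ₀ i = a ℓ₁ i} ∉ D) :
    ∃ A ∈ D, ∀ ℓ₀ ℓ₁ : Fin n, ℓ₀ ≠ ℓ₁ → (a ℓ₀ '' A) ∩ (a ℓ₁ '' A) = ∅ := by
  have hne : ∀ ℓ₀ ℓ₁ : Fin n, ℓ₀ ≠ ℓ₁ → {i | a ℓ₀ i = a ℓ₁ i} ∉ D := by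
    intro ℓ₀ ℓ₁ h
    rcases h.lt_or_gt with h | h
    · exact ha _ _ h
    · simpa only [eq_comm] using ha _ _ h
  -- Along `smallSets` each condition survives shrinking `A`, so the finitely many pairs combine.
  have hall : ∀ᶠ A in (D : Filter κ).smallSets,
      ∀ ℓ₀ ℓ₁ : Fin n, ℓ₀ ≠ ℓ₁ → Disjoint (a ℓ₀ '' A) (a ℓ₁ '' A) :=
    eventually_all.2 fun ℓ₀ => eventually_all.2 fun ℓ₁ =>
      eventually_imp_distrib_left.2 fun h => hD.eventually_disjoint_image (hne ℓ₀ ℓ₁ h)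
  obtain ⟨A, hA, hdisj⟩ := eventually_smallSets.1 hall
  exact ⟨A, hA, fun ℓ₀ ℓ₁ h => Set.disjoint_iff_inter_eq_empty.1 (hdisj A subset_rfl ℓ₀ ℓ₁ h)⟩
end

section
/- If D is a uniform ultrafilter on κ that is not separative, and I is a linear order of cardinality λ ≥ κ, then the ultrapower I^κ/D is not (λ,2)-entangled. -/
open Cardinal

universe u

/-! If `D` fails to separate `a` and `b`, take an injection `g : λ × κ → I` and the pairs
`t⁰_α(i) = g(α, a i)`, `t¹_α(i) = g(α, b i)`. For `α < β` the sets where `t⁰_α < t⁰_β` and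
`t¹_β < t¹_α` cannot both lie in `D`: their intersection `A` contains `i₁, i₂` with
`a i₁ = b i₂ = j`, which forces both `g(α, j) < g(β, j)` and `g(β, j) < g(α, j)`. -/

namespace Ultrafilter

variable {κ Y : Type*} {D : Ultrafilter κ} {a b : κ → Y}

theorem infinite_of_forall_image_inter_nonempty (hab : ∀ i, a i ≠ b i)
    (hins : ∀ A ∈ D, (a '' A ∩ b '' A).Nonempty) : Infinite κ := by
  by_contra hfin
  have : Finite κ := not_infinite_iff_finite.mp hfin
  obtain ⟨x, rfl⟩ := D.eq_pure_of_finite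
  obtain ⟨j, hja, hjb⟩ := hins {x} (Filter.singleton_mem_pure)
  rw [Set.image_singleton, Set.mem_singleton_iff] at hja hjb
  exact hab x (hja.symm.trans hjb)

theorem not_lt_comp_mem_and_gt_comp_mem {I : Type*} [Preorder I]
    (hins : ∀ A ∈ D, (a '' A ∩ b '' A).Nonempty) (u v : Y → I) :
    ¬({i | u (a i) < v (a i)} ∈ D ∧ {i | v (b i) < u (b i)} ∈ D) := by
  rintro ⟨hlt, hgt⟩
  obtain ⟨j, ⟨i₁, ⟨hi₁, -⟩, rfl⟩, ⟨i₂, ⟨-, hi₂⟩, hi₂j⟩⟩ := hins _ (Filter.inter_mem hlt hgt)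
  exact lt_asymm hi₁ (hi₂j ▸ hi₂)

end Ultrafilter

theorem Cardinal.nonempty_prod_embedding {X Y Z : Type u} [Infinite Y] (hYX : #Y ≤ #X)
    (hXZ : #X ≤ #Z) : Nonempty (X × Y ↪ Z) := by
  have hX : ℵ₀ ≤ #X := (aleph0_le_mk Y).trans hYX
  rw [← le_def, mk_prod, lift_id, lift_id, mul_eq_left hX hYX (mk_ne_zero Y)]
  exact hXZ

theorem stmt_13_general (κ : Type u) (D : Ultrafilter κ)
    (hnotsep : ¬∀ a b : κ → κ, (∀ i, a i ≠ b i) →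
      ∃ A ∈ D, (a '' A) ∩ (b '' A) = ∅)
    (lam : Cardinal.{u}) (I : Type u) [LinearOrder I]
    (hI : #I = lam) (hκlam : #κ ≤ lam) :
    ¬∀ t : Fin 2 → lam.ord.ToType → κ → I,
      (∀ (e : Fin 2) (α β : lam.ord.ToType), α ≠ β →
        {i | t e α i = t e β i} ∉ D) →
      ∃ α β : lam.ord.ToType, α < β ∧
        {i | t 0 α i < t 0 β i} ∈ D ∧ {i | t 1 β i < t 1 α i} ∈ D := by
  simp only [not_forall, ← Set.nonempty_iff_ne_empty, not_exists, not_and] at hnotsep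
  obtain ⟨a, b, hab, hins⟩ := hnotsep
  have := D.infinite_of_forall_image_inter_nonempty hab hins
  obtain ⟨g⟩ := nonempty_prod_embedding (Y := κ) (X := lam.ord.ToType) (Z := I)
    (by rwa [mk_ord_toType]) (by rw [mk_ord_toType, hI])
  intro hentangled
  obtain ⟨α, β, -, hlt, hgt⟩ := hentangled (fun e α i => g (α, ![a, b] e i)) fun e α β hne => by
    simp [g.injective.eq_iff, hne]
  exact D.not_lt_comp_mem_and_gt_comp_mem hins (fun j => g (α, j)) (fun j => g (β, j)) ⟨hlt, hgt⟩

/-- Proposition 6.10: if `D` is a uniform, non-separative ultrafilter on `κ`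
    and `I` is a linear order of cardinality `λ ≥ κ`, then the ultrapower
    `I^κ/D` is not (λ,2)-entangled. -/
theorem stmt_13 (κ : Type u) (D : Ultrafilter κ)
    (huniform : ∀ A : Set κ, A ∈ D → #A = #κ)
    (hnotsep : ¬∀ a b : κ → κ, (∀ i, a i ≠ b i) →
      ∃ A ∈ D, (a '' A) ∩ (b '' A) = ∅)
    (lam : Cardinal.{u}) (I : Type u) [LinearOrder I]
    (hI : #I = lam) (hκlam : #κ ≤ lam) :
    ¬∀ t : Fin 2 → lam.ord.ToType → κ → I,
      (∀ (e : Fin 2) (α β : lam.ord.ToType), α ≠ β →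
        {i | t e α i = t e β i} ∉ D) →
      ∃ α β : lam.ord.ToType, α < β ∧
        {i | t 0 α i < t 0 β i} ∈ D ∧ {i | t 1 β i < t 1 α i} ∈ D :=
  stmt_13_general κ D hnotsep lam I hI hκlam
end

section
/- If θ^κ/D > 2^(2^θ) (where θ^κ/D denotes the cardinality of the ultrapower of θ by D), then the ultrafilter D on κ is not separative. -/
open Cardinal

universe u

/-!
If `D` is separative, two functions `f g : κ → T` that are different modulo `D` induce different
ultrafilters `E_f ≠ E_g` on `T` whenever `T` embeds into `κ`: otherwise `f '' B ∈ E_f = E_g` for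
`B = {i | f i ≠ g i}`, so for `D`-many `j` the value `g j` is some `f k` with `k ∈ B`, and modifying
`g` off `B` so that it differs from `f` everywhere contradicts separativity. Hence `θ^κ/D` is at
most the number of ultrafilters on `θ`, hence at most `2^(2^θ)`, when `θ ≤ κ`, while for `κ ≤ θ` already
`θ^κ ≤ θ^θ ≤ 2^(2^θ)`.
-/

namespace Nat

theorem mul_self_le_two_pow {n : ℕ} (hn : 4 ≤ n) : n * n ≤ 2 ^ n := by
  induction n, hn using Nat.le_induction with
  | base => decide
  | succ m hm ih =>
    rw [pow_succ]
    nlinarith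

theorem pow_le_two_pow_two_pow {m n : ℕ} (h : m ≤ n) : n ^ m ≤ 2 ^ 2 ^ n := by
  rcases Nat.lt_or_ge n 4 with hn | hn
  · interval_cases n <;> interval_cases m <;> decide
  · calc n ^ m ≤ n ^ n := Nat.pow_le_pow_right (by omega) h
      _ ≤ (2 ^ n) ^ n := Nat.pow_le_pow_left Nat.lt_two_pow_self.le n
      _ = 2 ^ (n * n) := by rw [← pow_mul]
      _ ≤ 2 ^ 2 ^ n := Nat.pow_le_pow_right two_pos (mul_self_le_two_pow hn)

end Nat

namespace Cardinal

theorem power_le_two_power_two_power {a b : Cardinal} (h : b ≤ a) :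
    a ^ b ≤ (2 : Cardinal) ^ (2 : Cardinal) ^ a := by
  rcases le_or_gt ℵ₀ a with ha | ha
  · calc a ^ b ≤ a ^ a := power_le_power_left (aleph0_pos.trans_le ha).ne' h
      _ = 2 ^ a := power_self_eq ha
      _ ≤ 2 ^ 2 ^ a := power_le_power_left two_ne_zero (cantor a).le
  · obtain ⟨n, rfl⟩ := lt_aleph0.mp ha
    obtain ⟨m, rfl⟩ := lt_aleph0.mp (h.trans_lt ha)
    have h2 : (2 : Cardinal) = (2 : ℕ) := rfl
    rw [h2, power_natCast, ← Nat.cast_pow, power_natCast, ← Nat.cast_pow, power_natCast,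
      ← Nat.cast_pow, Nat.cast_le]
    exact Nat.pow_le_two_pow_two_pow (Nat.cast_le.mp h)

theorem mk_ultrafilter_le (α : Type u) : #(Ultrafilter α) ≤ (2 : Cardinal) ^ (2 : Cardinal) ^ #α := by
  have hinj : Function.Injective fun U : Ultrafilter α => (U : Filter α).sets :=
    fun _ _ h => Ultrafilter.coe_injective (Filter.filter_eq h)
  simpa only [mk_set] using mk_le_of_injective hinj

theorem mk_germ_le {κ α : Type u} (l : Filter κ) : #(l.Germ α) ≤ #α ^ #κ := by
  rw [power_def]
  exact mk_quotient_le

end Cardinal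

namespace Ultrafilter

variable {κ α β : Type*}

/-- For `α = κ` this is separativity of `D`. -/
def Separative (D : Ultrafilter κ) (α : Type*) : Prop :=
  ∀ a b : κ → α, (∀ i, a i ≠ b i) → ∃ A ∈ D, Disjoint (a '' A) (b '' A)

/-- The ultrafilter `E_f` induced on `α` by (a representative of) the germ `f`. -/
def mapGerm (D : Ultrafilter κ) : (D : Filter κ).Germ α → Ultrafilter α :=
  Quotient.lift (fun f : κ → α => D.map f) fun f g hfg =>
    coe_injective (by simpa only [coe_map] using Filter.map_congr hfg)

variable {D : Ultrafilter κ}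

theorem Separative.of_embedding (hD : D.Separative β) (ι : α ↪ β) : D.Separative α := by
  intro a b hab
  obtain ⟨A, hA, hdisj⟩ := hD (ι ∘ a) (ι ∘ b) fun i => ι.injective.ne (hab i)
  rw [Set.image_comp, Set.image_comp, Set.disjoint_image_iff ι.injective] at hdisj
  exact ⟨A, hA, hdisj⟩

theorem Separative.eventuallyEq_of_map_eq (hD : D.Separative α) {f g : κ → α}
    (hfg : D.map f = D.map g) : f =ᶠ[(D : Filter κ)] g := by
  by_contra hne
  set B := {i | f i ≠ g i}
  have hB : B ∈ D := (Filter.not_eventually.mp hne).eventually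
  obtain ⟨i₀, hi₀⟩ := D.nonempty_of_mem hB
  have : Nontrivial α := ⟨⟨_, _, hi₀⟩⟩
  classical
  let g' : κ → α := fun i => if f i = g i then (exists_ne (f i)).choose else g i
  have hfg' : ∀ i, f i ≠ g' i := by
    intro i
    by_cases hi : f i = g i
    · simpa only [g', if_pos hi] using (exists_ne (f i)).choose_spec.symm
    · simpa only [g', if_neg hi] using hi
  obtain ⟨A, hA, hdisj⟩ := hD f g' hfg'
  have hAB : A ∩ B ∈ D := Filter.inter_mem hA hB
  have hgf : g ⁻¹' (f '' (A ∩ B)) ∈ D := by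
    rw [← mem_map, ← hfg, mem_map]
    exact Filter.mem_of_superset hAB (Set.subset_preimage_image f _)
  obtain ⟨j, ⟨hjA, hjB⟩, k, hk, hkj⟩ := D.nonempty_of_mem (Filter.inter_mem hAB hgf)
  exact hdisj.ne_of_mem ⟨k, hk.1, rfl⟩ ⟨j, hjA, rfl⟩ (hkj.trans (if_neg hjB).symm)

theorem Separative.mapGerm_injective (hD : D.Separative α) :
    Function.Injective (D.mapGerm (α := α)) := by
  rintro ⟨f⟩ ⟨g⟩ hfg
  exact Filter.Germ.coe_eq.mpr (hD.eventuallyEq_of_map_eq hfg)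

end Ultrafilter

/-- Conclusion 6.11(1): if `θ^κ/D > 2^(2^θ)` then `D` is not separative. -/
theorem stmt_14 (κ : Type u) (D : Ultrafilter κ) (θ : Cardinal.{u})
    (h : (2 : Cardinal.{u}) ^ ((2 : Cardinal.{u}) ^ θ) < #(Filter.Germ (D : Filter κ) θ.ord.ToType)) :
    ¬∀ a b : κ → κ, (∀ i, a i ≠ b i) →
      ∃ A ∈ D, (a '' A) ∩ (b '' A) = ∅ := by
  intro H
  have hD : D.Separative κ := fun a b hab =>
    (H a b hab).imp fun _ ⟨hA, hdisj⟩ => ⟨hA, Set.disjoint_iff_inter_eq_empty.mpr hdisj⟩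
  refine h.not_ge ?_
  rcases le_total θ #κ with hθκ | hκθ
  · obtain ⟨ι⟩ : Nonempty (θ.ord.ToType ↪ κ) := by rwa [← le_def, mk_ord_toType]
    calc #((D : Filter κ).Germ θ.ord.ToType) ≤ #(Ultrafilter θ.ord.ToType) :=
          mk_le_of_injective (hD.of_embedding ι).mapGerm_injective
      _ ≤ (2 : Cardinal) ^ (2 : Cardinal) ^ θ := by simpa only [mk_ord_toType] using mk_ultrafilter_le θ.ord.ToType
  · calc #((D : Filter κ).Germ θ.ord.ToType) ≤ θ ^ #κ := by
          simpa only [mk_ord_toType] using mk_germ_le (α := θ.ord.ToType) (D : Filter κ)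
      _ ≤ (2 : Cardinal) ^ (2 : Cardinal) ^ θ := power_le_two_power_two_power hκθ
end

section
/- Assume I is a (μ,2)-entangled linear order and θ is a regular cardinal with θ < μ. Then there is a set A ⊆ I with |A| < μ such that for all x < y in I with {x,y} ⊄ A, the open interval (x,y) has at least θ elements. -/
/-!
Call `x` and `y` close when fewer than `θ` points lie between them. As `θ` is infinite this is an
equivalence relation with convex classes, and each class has at most `θ` points: a set of more
than `θ` points in which every initial segment has fewer than `θ` points cannot exist, since some
point would lie above a `θ`-sized subset. Choosing `a < b` in every class with two or more points
gives pairwise disjoint intervals `[a, b]`; if there were `μ` of them, entangledness would nest one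
inside another. So `A`, the union of these classes, has at most `κ · θ < μ` points for some `κ < μ`,
and any `x < y` with fewer than `θ` points between them are close, hence both lie in `A`.
-/

open Cardinal Set

universe u

section Order

variable {α : Type u} [LinearOrder α] {θ : Cardinal.{u}}

theorem Cardinal.mk_le_of_forall_mk_inter_Iic_lt (hθ : ℵ₀ ≤ θ) {s : Set α}
    (h : ∀ x ∈ s, #↥(s ∩ Iic x) < θ) : #s ≤ θ := by
  by_contra! hlt
  obtain ⟨W, hWs, hW⟩ := le_mk_iff_exists_subset.1 hlt.le
  have hunion : #↥(⋃ w ∈ W, s ∩ Iic w) < #s :=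
    calc #↥(⋃ w ∈ W, s ∩ Iic w) ≤ #W * ⨆ w : W, #↥(s ∩ Iic (w : α)) := mk_biUnion_le _ _
      _ ≤ θ * θ := by
        rw [hW]
        exact mul_le_mul_right (ciSup_le' fun w : W => (h w (hWs w.2)).le) θ
      _ = θ := mul_eq_self hθ
      _ < #s := hlt
  obtain ⟨y, hys, hy⟩ : ∃ y ∈ s, y ∉ ⋃ w ∈ W, s ∩ Iic w := by
    by_contra! hcover
    exact hunion.not_ge (mk_le_mk_of_subset hcover)
  -- `y` lies above every point of `W`, so `W ⊆ s ∩ Iic y` is too large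
  have hWy : W ⊆ s ∩ Iic y := fun w hw =>
    ⟨hWs hw, le_of_not_ge fun hyw => hy (mem_biUnion hw ⟨hys, hyw⟩)⟩
  exact (h y hys).not_ge (hW ▸ mk_le_mk_of_subset hWy)

theorem Cardinal.mk_setOf_mk_uIcc_lt_le (hθ : ℵ₀ ≤ θ) (c : α) :
    #{x | #↥(uIcc c x) < θ} ≤ θ := by
  set S := {x | #↥(uIcc c x) < θ}
  have hup : #↥(S ∩ Ici c) ≤ θ := by
    refine mk_le_of_forall_mk_inter_Iic_lt hθ fun x hx => ?_
    refine (mk_le_mk_of_subset fun y hy => ?_).trans_lt hx.1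
    exact Icc_subset_uIcc ⟨hy.1.2, hy.2⟩
  have hdown : #↥(S ∩ Iic c) ≤ θ := by
    have h : ∀ x ∈ S ∩ Iic c, #↥(S ∩ Iic c ∩ Ici x) < θ := fun x hx =>
      (mk_le_mk_of_subset fun y hy => Icc_subset_uIcc' ⟨hy.2, hy.1.2⟩).trans_lt hx.1
    exact mk_le_of_forall_mk_inter_Iic_lt (α := αᵒᵈ) hθ h
  calc #S ≤ #↥(S ∩ Ici c ∪ S ∩ Iic c) :=
        mk_le_mk_of_subset fun x hx => (le_total c x).imp (⟨hx, ·⟩) (⟨hx, ·⟩)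
    _ ≤ θ + θ := (mk_union_le _ _).trans (add_le_add hup hdown)
    _ = θ := add_eq_self hθ

theorem Cardinal.mk_Icc_lt_of_mk_Ioo_lt (hθ : ℵ₀ ≤ θ) {a b : α} (hab : a < b)
    (h : #↥(Ioo a b) < θ) : #↥(Icc a b) < θ := by
  have h1 : (1 : Cardinal) < θ := one_lt_aleph0.trans_le hθ
  rw [← Ico_insert_right hab.le, ← Ioo_insert_left hab]
  exact mk_insert_le.trans_lt <| add_lt_of_lt hθ (mk_insert_le.trans_lt (add_lt_of_lt hθ h h1)) h1

end Order

section Closeness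

variable {I : Type u} [LinearOrder I] {θ : Cardinal.{u}}

variable (I θ) in
def closeSetoid (hθ : ℵ₀ ≤ θ) : Setoid I where
  r x y := #↥(uIcc (x : I) y) < θ
  iseqv :=
    { refl := fun x => by
        rw [uIcc_self, mk_singleton]
        exact one_lt_aleph0.trans_le hθ
      symm := fun {x y} h => by rwa [uIcc_comm]
      trans := fun hxy hyz =>
        (mk_le_mk_of_subset uIcc_subset_uIcc_union_uIcc).trans_lt <|
          (mk_union_le _ _).trans_lt (add_lt_of_lt hθ hxy hyz) }

theorem closeSetoid_rel_of_mem_Icc (hθ : ℵ₀ ≤ θ) {a b y : I}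
    (hab : closeSetoid I θ hθ a b) (hy : y ∈ Icc a b) : closeSetoid I θ hθ a y :=
  (mk_le_mk_of_subset (uIcc_subset_uIcc_left (Icc_subset_uIcc hy))).trans_lt hab

variable (I θ) in
def nontrivialCloseClasses (hθ : ℵ₀ ≤ θ) : Set (Quotient (closeSetoid I θ hθ)) :=
  {q | ∃ x y, x < y ∧ ⟦x⟧ = q ∧ ⟦y⟧ = q}

theorem mk_setOf_exists_closeSetoid_rel_le (hθ : ℵ₀ ≤ θ) :
    #{x : I | ∃ y ≠ x, closeSetoid I θ hθ x y} ≤ #(nontrivialCloseClasses I θ hθ) * θ := by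
  let s := closeSetoid I θ hθ
  have hcover : {x : I | ∃ y ≠ x, s x y} ⊆
      ⋃ q ∈ nontrivialCloseClasses I θ hθ, {x | #↥(uIcc q.out x) < θ} := by
    rintro x ⟨y, hyx, hxy⟩
    refine mem_biUnion (x := ⟦x⟧) ?_ (Quotient.mk_out x)
    rcases hyx.lt_or_gt with hlt | hlt
    · exact ⟨y, x, hlt, Quotient.sound (s.symm hxy), rfl⟩
    · exact ⟨x, y, hlt, rfl, Quotient.sound (s.symm hxy)⟩
  calc #{x : I | ∃ y ≠ x, s x y}
      ≤ #↥(⋃ q ∈ nontrivialCloseClasses I θ hθ, {x | #↥(uIcc q.out x) < θ}) :=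
        mk_le_mk_of_subset hcover
    _ ≤ #(nontrivialCloseClasses I θ hθ) *
        ⨆ q : nontrivialCloseClasses I θ hθ, #{x | #↥(uIcc q.1.out x) < θ} := mk_biUnion_le _ _
    _ ≤ #(nontrivialCloseClasses I θ hθ) * θ := by
      gcongr
      exact ciSup_le' fun q => mk_setOf_mk_uIcc_lt_le hθ q.1.out

end Closeness

def IsTwoEntangled (μ : Cardinal.{u}) (I : Type u) [LinearOrder I] : Prop :=
  ∀ t : Fin 2 → μ.ord.ToType → I,
    (∀ e, Function.Injective (t e)) →
    (∀ α β : μ.ord.ToType, t 0 α ≠ t 1 β) →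
    ∃ α β : μ.ord.ToType, α < β ∧ t 0 α < t 0 β ∧ t 1 β < t 1 α

namespace IsTwoEntangled

variable {μ : Cardinal.{u}} {I : Type u} [LinearOrder I]

theorem mk_lt_of_pairwise_disjoint_Icc (hI : IsTwoEntangled μ I) {ι : Type u} {a b : ι → I}
    (hab : ∀ i, a i < b i)
    (hdisj : Pairwise fun i j => Disjoint (Icc (a i) (b i)) (Icc (a j) (b j))) : #ι < μ := by
  by_contra! hμ
  obtain ⟨e⟩ : Nonempty (μ.ord.ToType ↪ ι) := by rwa [← le_def, mk_ord_toType]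
  have hmem : ∀ {i j x}, x ∈ Icc (a i) (b i) → x ∈ Icc (a j) (b j) → i = j := fun hi hj => by
    by_contra hij
    exact disjoint_left.1 (hdisj hij) hi hj
  have hleft : ∀ i, a i ∈ Icc (a i) (b i) := fun i => left_mem_Icc.2 (hab i).le
  have hright : ∀ i, b i ∈ Icc (a i) (b i) := fun i => right_mem_Icc.2 (hab i).le
  obtain ⟨α, β, hαβ, ha, hb⟩ := hI ![a ∘ e, b ∘ e]
    (Fin.forall_fin_two.2
      ⟨fun α β (h : a (e α) = a (e β)) =>
          e.injective (hmem (hleft (e α)) (h ▸ hleft (e β))),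
        fun α β (h : b (e α) = b (e β)) =>
          e.injective (hmem (hright (e α)) (h ▸ hright (e β)))⟩)
    (fun α β (h : a (e α) = b (e β)) => by
      have hβ : a (e α) ∈ Icc (a (e β)) (b (e β)) := by rw [h]; exact hright (e β)
      obtain rfl := e.injective (hmem (hleft (e α)) hβ)
      exact (hab _).ne h)
  -- the pair indexed by `β` is nested inside the one indexed by `α`
  exact hαβ.ne (e.injective (hmem ⟨ha.le, ((hab _).trans hb).le⟩ (hleft (e β))))

theorem mk_nontrivialCloseClasses_lt (hI : IsTwoEntangled μ I) {θ : Cardinal.{u}}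
    (hθ : ℵ₀ ≤ θ) : #(nontrivialCloseClasses I θ hθ) < μ := by
  choose a b hab ha hb using fun q : nontrivialCloseClasses I θ hθ => q.2
  have hclass : ∀ q x, x ∈ Icc (a q) (b q) → ⟦x⟧ = q.1 := fun q x hx =>
    (Quotient.sound ((closeSetoid I θ hθ).symm
      (closeSetoid_rel_of_mem_Icc hθ (Quotient.exact ((ha q).trans (hb q).symm)) hx))).trans (ha q)
  exact hI.mk_lt_of_pairwise_disjoint_Icc hab fun q r hqr =>
    disjoint_left.2 fun x hxq hxr =>
      hqr (Subtype.ext ((hclass q x hxq).symm.trans (hclass r x hxr)))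

end IsTwoEntangled

theorem stmt_15_general (μ θ : Cardinal.{u}) (I : Type u) [LinearOrder I]
    (hθreg : θ.IsRegular) (hθμ : θ < μ)
    (hent : ∀ t : Fin 2 → μ.ord.ToType → I,
      (∀ e, Function.Injective (t e)) →
      (∀ α β : μ.ord.ToType, t 0 α ≠ t 1 β) →
      ∃ α β : μ.ord.ToType, α < β ∧ t 0 α < t 0 β ∧ t 1 β < t 1 α) :
    ∃ A : Set I, #A < μ ∧
      ∀ x y : I, x < y → ¬(x ∈ A ∧ y ∈ A) → θ ≤ #(Set.Ioo x y) := by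
  have hθ : ℵ₀ ≤ θ := hθreg.aleph0_le
  have hI : IsTwoEntangled μ I := hent
  refine ⟨{x | ∃ y ≠ x, closeSetoid I θ hθ x y}, ?_, fun x y hxy hA => ?_⟩
  · calc _ ≤ #(nontrivialCloseClasses I θ hθ) * θ := mk_setOf_exists_closeSetoid_rel_le hθ
      _ < μ := mul_lt_of_lt (hθ.trans hθμ.le) (hI.mk_nontrivialCloseClasses_lt hθ) hθμ
  · by_contra! hlt
    have hxy_close : closeSetoid I θ hθ x y := by
      show #↥(uIcc x y) < θ
      exact uIcc_of_le hxy.le ▸ mk_Icc_lt_of_mk_Ioo_lt hθ hxy hlt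
    exact hA ⟨⟨y, hxy.ne', hxy_close⟩, ⟨x, hxy.ne, (closeSetoid I θ hθ).symm hxy_close⟩⟩

/-- Proposition 6.14: if `I` is a (μ,2)-entangled linear order and `θ < μ` is
    regular, then there is `A ⊆ I` with `|A| < μ` such that every interval
    `(x,y)` with not both endpoints in `A` has at least `θ` elements. -/
theorem stmt_15 (μ θ : Cardinal.{u}) (I : Type u) [LinearOrder I]
    (hθreg : θ.IsRegular) (hθμ : θ < μ)
    (hcard : μ ≤ #I)
    (hent : ∀ t : Fin 2 → μ.ord.ToType → I,
      (∀ e, Function.Injective (t e)) →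
      (∀ α β : μ.ord.ToType, t 0 α ≠ t 1 β) →
      ∃ α β : μ.ord.ToType, α < β ∧ t 0 α < t 0 β ∧ t 1 β < t 1 α) :
    ∃ A : Set I, #A < μ ∧
      ∀ x y : I, x < y → ¬(x ∈ A ∧ y ∈ A) → θ ≤ #(Set.Ioo x y) :=
  stmt_15_general μ θ I hθreg hθμ hent
end

section
/- If I is a strongly (μ,σ)-entangled linear order and θ is an infinite cardinal with θ < σ and μ ≤ |I|, then 2^θ < μ. -/
/-! Suppose `μ ≤ 2^θ`, so that there are pairwise distinct functions `f_α : θ → 2`, `α < μ`.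
Fix two order embeddings `lo, hi : 2 ↪o I` with disjoint ranges and consider the `θ + θ`
sequences `α ↦ lo (f_α ε)` and `α ↦ hi (f_α ε)`. Entangledness, with the `lo`-sequences
required to increase and the `hi`-sequences to decrease, yields `α < β` with `f_α ≤ f_β`
and `f_β ≤ f_α`, contradicting `f_α ≠ f_β`. -/

open Cardinal

universe u

/-- `I` is strongly (μ,σ)-entangled (Definition 6.12(1)). -/
def StronglyEntangled (μ σ : Cardinal.{u}) (I : Type u) [LinearOrder I] : Prop :=
  σ + ℵ₀ ≤ #I ∧ σ + ℵ₀ ≤ μ ∧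
  ∀ (E : Type u), #E < 1 + σ → ∀ (u : Set E) (t : E → μ.ord.ToType → I),
    (∀ (α : μ.ord.ToType) (ζ ξ : E), ζ ∈ u → ξ ∉ u → t ζ α ≠ t ξ α) →
    ∃ α β : μ.ord.ToType, α < β ∧
      (∀ e ∈ u, t e α ≤ t e β) ∧ (∀ e ∉ u, t e β ≤ t e α)

theorem Infinite.nonempty_fin_orderEmbedding (I : Type*) [LinearOrder I] [Infinite I] (n : ℕ) :
    Nonempty (Fin n ↪o I) :=
  let ⟨s, hs⟩ := Infinite.exists_subset_card_eq I n
  ⟨s.orderEmbOfFin hs⟩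

theorem Infinite.exists_orderEmbedding_fin_two_ne (I : Type*) [LinearOrder I] [Infinite I] :
    ∃ lo hi : Fin 2 ↪o I, ∀ x y, lo x ≠ hi y := by
  obtain ⟨e⟩ := Infinite.nonempty_fin_orderEmbedding I 4
  refine ⟨(Fin.castAddOrderEmb 2).trans e, (Fin.natAddOrderEmb 2).trans e, fun x y => ?_⟩
  refine (e.lt_iff_lt.2 ?_).ne
  simp [Fin.castAddOrderEmb, Fin.natAddOrderEmb, Fin.lt_def]
  omega

namespace StronglyEntangled

variable {μ σ : Cardinal.{u}} {I : Type u} [LinearOrder I]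

theorem infinite (hent : StronglyEntangled μ σ I) : Infinite I :=
  Cardinal.infinite_iff.2 (le_add_self.trans hent.1)

theorem exists_lt_eq (hent : StronglyEntangled μ σ I) {T : Type u} {K : Type*} [PartialOrder K]
    (hT : #(T ⊕ T) < 1 + σ) (lo hi : K ↪o I) (hsep : ∀ x y, lo x ≠ hi y)
    (f : μ.ord.ToType → T → K) : ∃ α β, α < β ∧ f α = f β := by
  let t : T ⊕ T → μ.ord.ToType → I := fun z α => Sum.elim (lo ∘ f α) (hi ∘ f α) z
  have hsep' : ∀ α (ζ ξ : T ⊕ T), ζ ∈ Set.range Sum.inl → ξ ∉ Set.range Sum.inl →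
      t ζ α ≠ t ξ α := by
    rintro α _ (ε | ε) ⟨_, rfl⟩ hξ
    · exact absurd ⟨ε, rfl⟩ hξ
    · exact hsep _ _
  obtain ⟨α, β, hαβ, hlo, hhi⟩ := hent.2.2 (T ⊕ T) hT (Set.range Sum.inl) t hsep'
  refine ⟨α, β, hαβ, le_antisymm (fun ε => ?_) (fun ε => ?_)⟩
  · exact lo.le_iff_le.1 (hlo (.inl ε) ⟨ε, rfl⟩)
  · exact hi.le_iff_le.1 (hhi (.inr ε) (by simp))

theorem two_power_lt (hent : StronglyEntangled μ σ I) {T : Type u} (hT : #(T ⊕ T) < 1 + σ) :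
    2 ^ #T < μ := by
  have := hent.infinite
  obtain ⟨lo, hi, hsep⟩ := Infinite.exists_orderEmbedding_fin_two_ne I
  by_contra! hμ
  obtain ⟨f⟩ : #μ.ord.ToType ≤ #(T → Fin 2) := by simpa using hμ
  obtain ⟨α, β, hαβ, hf⟩ := hent.exists_lt_eq hT lo hi hsep f
  exact hαβ.ne (f.injective hf)

end StronglyEntangled

theorem stmt_16_general (μ σ θ : Cardinal.{u}) (I : Type u) [LinearOrder I]
    (hent : StronglyEntangled μ σ I)
    (hθ : ℵ₀ ≤ θ) (hθσ : θ < σ) :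
    (2 : Cardinal.{u}) ^ θ < μ := by
  have hθθ : #(θ.out ⊕ θ.out) < 1 + σ := by
    rw [mk_sum, lift_id, mk_out, add_eq_self hθ]
    exact hθσ.trans_le le_add_self
  simpa using hent.two_power_lt hθθ

/-- Proposition 6.15(a): if `I` is strongly (μ,σ)-entangled, `ℵ₀ ≤ θ < σ`
    and `μ ≤ |I|`, then `2^θ < μ`. -/
theorem stmt_16 (μ σ θ : Cardinal.{u}) (I : Type u) [LinearOrder I]
    (hent : StronglyEntangled μ σ I)
    (hθ : ℵ₀ ≤ θ) (hθσ : θ < σ) (hμI : μ ≤ #I) :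
    (2 : Cardinal.{u}) ^ θ < μ :=
  stmt_16_general μ σ θ I hent hθ hθσ
end

section
/- If a linear order I has |I| ≥ θ where ℵ₀ ≤ θ < σ, then the σ-complete interval Boolean algebra BA^σ_inter(I) is not 2^θ-narrow: it contains a chain/antichain structure giving a pie of cardinality 2^θ. -/
open Cardinal

universe u

/-- Membership in the σ-complete interval algebra `BA^σ_inter(I)`: the family
    of subsets of `I` generated from the initial segments `[-∞, s)` by
    complementation and unions and intersections of fewer than σ members. -/
inductive InterGen (σ : Cardinal.{u}) (I : Type u) [LinearOrder I] : Set I → Prop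
  | basic (s : I) : InterGen σ I {x | x < s}
  | compl (A : Set I) : InterGen σ I A → InterGen σ I Aᶜ
  | iUnion (ι : Type u) (f : ι → Set I) : #ι < σ →
      (∀ j, InterGen σ I (f j)) → InterGen σ I (⋃ j, f j)
  | iInter (ι : Type u) (f : ι → Set I) : #ι < σ →
      (∀ j, InterGen σ I (f j)) → InterGen σ I (⋂ j, f j)

/-- Proposition 6.15A: if `|I| ≥ θ` where `ℵ₀ ≤ θ < σ`, then `BA^σ_inter(I)`
    is not `2^θ`-narrow: it has a pie of cardinality `2^θ`. -/
theorem stmt_17 (σ θ : Cardinal.{u}) (I : Type u) [LinearOrder I]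
    (hθ : ℵ₀ ≤ θ) (hθσ : θ < σ) (hI : θ ≤ #I) :
    ∃ Y : Set (Set I), (∀ A ∈ Y, InterGen σ I A) ∧
      (∀ A ∈ Y, ∀ B ∈ Y, A ≠ B → ¬A ⊆ B ∧ ¬B ⊆ A) ∧
      (2 : Cardinal.{u}) ^ θ ≤ #Y := by
  set α := θ.out with hα
  have hmkα : #α = θ := Cardinal.mk_out θ
  have hsum : #(α ⊕ α) = θ := by
    rw [Cardinal.mk_sum, hmkα]; simp only [Cardinal.lift_id]
    exact Cardinal.add_eq_self hθ
  obtain ⟨h⟩ : Nonempty ((α ⊕ α) ↪ I) := by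
    rw [← Cardinal.le_def, hsum]; exact hI
  -- the "local interval" at h p
  set C : (α ⊕ α) → Set I := fun p => {y | h p ≤ y ∧ ∀ q, h p < h q → y < h q}
    with hC
  have hCmem : ∀ p q, h q ∈ C p ↔ p = q := by
    intro p q
    constructor
    · rintro ⟨h1, h2⟩
      by_contra hne
      rcases lt_or_gt_of_ne (h.injective.ne hne) with hlt | hlt
      · exact absurd (h2 q hlt) (lt_irrefl _)
      · exact absurd h1 (not_le.mpr hlt)
    · rintro rfl; exact ⟨le_rfl, fun q hq => hq⟩
  have hCgen : ∀ p, InterGen σ I (C p) := by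
    intro p
    have hrw : C p = ⋂ (o : Option {q // h p < h q}),
        (Option.elim o {y | y < h p}ᶜ (fun q => {y | y < h q.1})) := by
      ext y
      simp only [hC, Set.mem_iInter, Set.mem_setOf_eq]
      constructor
      · rintro ⟨h1, h2⟩ o
        cases o with
        | none => simpa using not_lt.mpr h1
        | some q => exact h2 q.1 q.2
      · intro hy
        refine ⟨not_lt.mp (by simpa using hy none), fun q hq => hy (some ⟨q, hq⟩)⟩
    rw [hrw]
    apply InterGen.iInter
    · calc #(Option {q // h p < h q}) = #{q // h p < h q} + 1 := Cardinal.mk_option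
        _ ≤ θ + θ := add_le_add (le_trans (Cardinal.mk_subtype_le _) hsum.le)
            (le_trans Cardinal.one_lt_aleph0.le hθ)
        _ = θ := Cardinal.add_eq_self hθ
        _ < σ := hθσ
    · rintro (_ | q)
      · exact InterGen.compl _ (InterGen.basic _)
      · exact InterGen.basic _
  set T : Set α → Set (α ⊕ α) := fun S => Sum.inl '' S ∪ Sum.inr '' Sᶜ with hT
  have hTL : ∀ (S : Set α) (i : α), Sum.inl i ∈ T S ↔ i ∈ S := by
    intro S i; simp [hT]
  have hTR : ∀ (S : Set α) (i : α), Sum.inr i ∈ T S ↔ i ∉ S := by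
    intro S i; simp [hT]
  set A : Set α → Set I := fun S => ⋃ (p : T S), C p.1 with hA
  have hAmem : ∀ (S : Set α) (q : α ⊕ α), h q ∈ A S ↔ q ∈ T S := by
    intro S q
    simp only [hA, Set.mem_iUnion]
    constructor
    · rintro ⟨⟨p, hp⟩, hm⟩
      obtain rfl := (hCmem p q).mp hm
      exact hp
    · intro hq; exact ⟨⟨q, hq⟩, (hCmem q q).mpr rfl⟩
  have hAgen : ∀ S, InterGen σ I (A S) := by
    intro S
    apply InterGen.iUnion
    · exact lt_of_le_of_lt (le_trans (Cardinal.mk_subtype_le _) hsum.le) hθσ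
    · intro p; exact hCgen p.1
  have hincomp : ∀ S S', S ≠ S' → ¬ A S ⊆ A S' := by
    intro S S' hne hsub
    have hTT : ∀ p ∈ T S, p ∈ T S' := fun p hp =>
      (hAmem S' p).mp (hsub ((hAmem S p).mpr hp))
    apply hne
    ext i
    constructor
    · intro hi
      exact (hTL S' i).mp (hTT _ ((hTL S i).mpr hi))
    · intro hi
      by_contra hni
      exact (hTR S' i).mp (hTT _ ((hTR S i).mpr hni)) hi
  refine ⟨Set.range A, ?_, ?_, ?_⟩
  · rintro _ ⟨S, rfl⟩; exact hAgen S
  · rintro _ ⟨S, rfl⟩ _ ⟨S', rfl⟩ hne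
    have hSne : S ≠ S' := fun e => hne (by rw [e])
    exact ⟨hincomp S S' hSne, hincomp S' S hSne.symm⟩
  · have hinj : Function.Injective A := by
      intro S S' e
      by_contra hne
      exact hincomp S S' hne (e ▸ subset_rfl)
    calc (2 : Cardinal.{u}) ^ θ = #(Set α) := by rw [Cardinal.mk_set, hmkα]
      _ = #(Set.range A) := (Cardinal.mk_range_eq A hinj).symm
      _ ≤ #(Set.range A) := le_rfl
end

section
/- Let σ = θ⁺ > ℵ₀ and suppose μ is a singular cardinal. If a linear order I is strongly (μ,σ)-entangled, then for some μ' < μ, I is strongly (μ',σ)-entangled (and hence this holds for every sufficiently large μ' < μ). -/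
/-!
A failure of strong entanglement is witnessed by a family of pairwise distinct, separated rows in
`I` with no infinite strictly increasing sequence for the mixed order; conversely such a family of
size `μ`, enumerated along a well-order extending the mixed order, refutes strong
`(μ, σ)`-entanglement. If `I` fails below the singular `μ`, glue `cf μ` bad families of sizes
`< μ` summing to `μ`, tagging each block by its own row of one more bad family of size `cf μ`.
Making tags and blocks take disjoint values costs a pigeonhole over `2 ^ θ` patterns, harmless as
`2 ^ θ < μ`: otherwise the `2 ^ θ` rows of characteristic functions already form a bad family of
size `μ`.
-/

open Cardinal

universe u

namespace Entangled

open Function Set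

variable {I : Type u} [LinearOrder I]

def MixedLE {E : Type*} (up : Set E) (f g : E → I) : Prop :=
  (∀ e ∈ up, f e ≤ g e) ∧ ∀ e ∉ up, g e ≤ f e

def MixedLT {E : Type*} (up : Set E) (f g : E → I) : Prop :=
  MixedLE up f g ∧ f ≠ g

theorem MixedLE.comp {E E' : Type*} {up : Set E} {up' : Set E'} {f g : E' → I}
    (h : MixedLE up' f g) (k : E → E') (hk : ∀ e, k e ∈ up' ↔ e ∈ up) :
    MixedLE up (f ∘ k) (g ∘ k) :=
  ⟨fun e he => h.1 _ ((hk e).2 he), fun e he => h.2 _ (mt (hk e).1 he)⟩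

/-- The well-foundedness condition says that there is no infinite strictly `MixedLE`-increasing
sequence of rows. -/
structure IsBadFamily {E X : Type*} (up : Set E) (row : X → E → I) : Prop where
  injective : Injective row
  separated : ∀ x, ∀ a ∈ up, ∀ b ∉ up, row x a ≠ row x b
  wellFounded : WellFounded fun x y => MixedLT up (row y) (row x)

def HasBadFamily (θ κ : Cardinal.{u}) (I : Type u) [LinearOrder I] : Prop :=
  ∃ (E X : Type u) (up : Set E) (row : X → E → I), #E ≤ θ ∧ κ ≤ #X ∧ IsBadFamily up row

theorem HasBadFamily.mono {θ κ κ' : Cardinal.{u}} (h : HasBadFamily θ κ I) (hκ : κ' ≤ κ) :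
    HasBadFamily θ κ' I :=
  let ⟨E, X, up, row, hE, hX, hbad⟩ := h
  ⟨E, X, up, row, hE, hκ.trans hX, hbad⟩

/-- Enumerate `X` along a well-order extending `r`. -/
theorem exists_injective_not_rel_of_wellFounded {X : Type u} {r : X → X → Prop}
    (hr : WellFounded r) {μ : Cardinal.{u}} (hμ : μ ≤ #X) :
    ∃ g : μ.ord.ToType → X, Injective g ∧ ∀ α β, α < β → ¬ r (g β) (g α) := by
  have : IsWellFounded X r := ⟨hr⟩
  obtain ⟨s, hrs, hs⟩ := IsWellFounded.exists_well_order_ge r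
  have htype : Ordinal.type (α := μ.ord.ToType) (· < ·) ≤ Ordinal.type s := by
    rwa [Ordinal.type_toType, ord_le, Ordinal.card_type]
  obtain ⟨g⟩ := Ordinal.type_le_iff'.mp htype
  exact ⟨g, g.injective, fun α β hαβ hr => asymm (g.map_rel_iff.mpr hαβ) (hrs _ _ hr)⟩

theorem HasBadFamily.not_stronglyEntangled {θ σ μ : Cardinal.{u}} (h : HasBadFamily θ μ I)
    (hθσ : θ < σ) : ¬ StronglyEntangled μ σ I := by
  rintro ⟨-, -, hent⟩
  obtain ⟨E, X, up, row, hE, hX, hbad⟩ := h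
  obtain ⟨g, hg, hmono⟩ := exists_injective_not_rel_of_wellFounded hbad.wellFounded hX
  obtain ⟨α, β, hαβ, hle⟩ := hent E (hE.trans_lt (hθσ.trans_le le_add_self)) up
    (fun e α => row (g α) e) fun α a b ha hb => hbad.separated (g α) a ha b hb
  exact hmono α β hαβ ⟨hle, fun heq => hαβ.ne (hg (hbad.injective heq))⟩

theorem hasBadFamily_of_not_stronglyEntangled {θ σ κ : Cardinal.{u}} (hσ : σ = Order.succ θ)
    (hθ : ℵ₀ ≤ θ) (hI : σ + ℵ₀ ≤ #I) (hκ : σ + ℵ₀ ≤ κ) (h : ¬ StronglyEntangled κ σ I) :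
    HasBadFamily θ κ I := by
  simp only [StronglyEntangled, hI, hκ, true_and, not_forall, exists_prop] at h
  obtain ⟨E, hE, up, t, hsep, hno⟩ := h
  let row : κ.ord.ToType → E → I := fun α e => t e α
  have hno : ∀ α β, α < β → ¬ MixedLE up (row α) (row β) := fun α β hαβ hle =>
    hno ⟨α, β, hαβ, hle⟩
  have hinj : Injective row := by
    intro α β heq
    by_contra hne
    rcases lt_or_gt_of_ne hne with hαβ | hβα
    · exact hno α β hαβ (heq ▸ ⟨fun _ _ => le_rfl, fun _ _ => le_rfl⟩)
    · exact hno β α hβα (heq ▸ ⟨fun _ _ => le_rfl, fun _ _ => le_rfl⟩)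
  have hlt : ∀ α β, MixedLT up (row β) (row α) → α < β := fun α β hαβ =>
    (lt_or_gt_of_ne fun h => hαβ.2 (by rw [h])).resolve_right fun hβα => hno β α hβα hαβ.1
  refine ⟨E, κ.ord.ToType, up, row, ?_, by simp, hinj,
    fun α a ha b hb => hsep α a b ha hb, Subrelation.wf (hlt _ _) wellFounded_lt⟩
  have hσ₀ : ℵ₀ ≤ σ := hσ ▸ hθ.trans (Order.le_succ θ)
  rwa [add_eq_right hσ₀ (one_le_aleph0.trans hσ₀), hσ, Order.lt_succ_iff] at hE

theorem hasBadFamily_two_power [Nontrivial I] {θ : Cardinal.{u}} (hθ : ℵ₀ ≤ θ) :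
    HasBadFamily θ (2 ^ θ) I := by
  classical
  obtain ⟨j₀, j₁, hj⟩ := exists_pair_lt I
  let row : Set θ.out → θ.out ⊕ θ.out → I := fun x =>
    Sum.elim (fun d => if d ∈ x then j₁ else j₀) (fun d => if d ∈ x then j₀ else j₁)
  -- with no increasing column, `MixedLE` is the reverse pointwise order, for which these rows
  -- form an antichain
  have hanti : ∀ x y, MixedLE ∅ (row x) (row y) → x = y := by
    intro x y hle
    ext d
    have hl := hle.2 (Sum.inl d) (Set.notMem_empty _)
    have hr := hle.2 (Sum.inr d) (Set.notMem_empty _)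
    by_cases hx : d ∈ x <;> by_cases hy : d ∈ y <;> simp_all [row, not_le.mpr hj]
  refine ⟨θ.out ⊕ θ.out, Set θ.out, ∅, row, ?_, by simp, ?_, ?_, ?_⟩
  · simp [add_eq_left hθ le_rfl]
  · exact fun x y heq => hanti x y (heq ▸ ⟨fun _ _ => le_rfl, fun _ _ => le_rfl⟩)
  · exact fun x a ha => absurd ha (Set.notMem_empty a)
  · exact ⟨fun x => ⟨x, fun y hy => (hy.2 (congrArg row (hanti x y hy.1))).elim⟩⟩

theorem IsBadFamily.restrict {E X : Type*} {up : Set E} {row : X → E → I}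
    (h : IsBadFamily up row) (Y : Set X) (C : Set E)
    (hC : ∀ x ∈ Y, ∀ y ∈ Y, ∀ e ∉ C, row x e = row y e) :
    IsBadFamily {c : C | (c : E) ∈ up} fun (y : Y) (c : C) => row y c := by
  have hext : ∀ x y : Y, (∀ c : C, row x c = row y c) → row x = row y := fun x y hxy =>
    funext fun e => by_cases (fun he : e ∈ C => hxy ⟨e, he⟩) (hC x x.2 y y.2 e)
  refine ⟨fun x y hxy => Subtype.ext (h.injective (hext x y (congrFun hxy))),
    fun x a ha b hb => h.separated x a ha b hb, Subrelation.wf ?_ (InvImage.wf (↑) h.wellFounded)⟩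
  rintro x y ⟨hle, hne⟩
  refine ⟨⟨fun e he => ?_, fun e he => ?_⟩, fun heq => hne (funext fun c => congrFun heq c)⟩
  · by_cases heC : e ∈ C
    · exact hle.1 ⟨e, heC⟩ he
    · exact (hC y y.2 x x.2 e heC).le
  · by_cases heC : e ∈ C
    · exact hle.2 ⟨e, heC⟩ he
    · exact (hC x x.2 y y.2 e heC).le

theorem IsBadFamily.of_comp {E E' X : Type*} {up : Set E} {up' : Set E'} {row : X → E → I}
    (h : IsBadFamily up row) {row' : X → E' → I} (k : E → E') (hk : ∀ e, k e ∈ up' ↔ e ∈ up)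
    (hrow : ∀ x, row' x ∘ k = row x) (hsep : ∀ x, ∀ a ∈ up', ∀ b ∉ up', row' x a ≠ row' x b) :
    IsBadFamily up' row' := by
  refine ⟨fun x y hxy => h.injective ?_, hsep, Subrelation.wf ?_ h.wellFounded⟩
  · rw [← hrow x, ← hrow y, hxy]
  · rintro x y ⟨hle, hne⟩
    refine ⟨hrow x ▸ hrow y ▸ hle.comp k hk, fun heq => hne ?_⟩
    rw [h.injective heq]

/-- The unused columns of each row are filled with two fresh values. -/
theorem IsBadFamily.exists_sum_columns {E X D : Type*} {up : Set E} {row : X → E → I}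
    (h : IsBadFamily up row) (j : E ↪ D) (W : Set I) (hW : ∀ x e, row x e ∉ W)
    (hfill : ∀ x, (range (row x) ∪ W)ᶜ.Nontrivial) :
    ∃ row' : X → D ⊕ D → I, IsBadFamily (range Sum.inl) row' ∧ ∀ x p, row' x p ∉ W := by
  classical
  choose a ha b hb hab using hfill
  let k : E → D ⊕ D := fun e => if e ∈ up then .inl (j e) else .inr (j e)
  have hk : ∀ e, k e ∈ range Sum.inl ↔ e ∈ up := fun e => by by_cases he : e ∈ up <;> simp [k, he]
  have hkinj : Injective k := fun e e' hee' => by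
    by_cases he : e ∈ up <;> by_cases he' : e' ∈ up <;> simp_all [k]
  let row' : X → D ⊕ D → I := fun x => extend k (row x) (Sum.elim (fun _ => a x) fun _ => b x)
  have hrow : ∀ x, row' x ∘ k = row x := fun x => funext (hkinj.extend_apply _ _)
  have hvals : ∀ x p, (∃ e, k e = p ∧ row' x p = row x e) ∨
      (p ∉ range k ∧ row' x p = Sum.elim (fun _ => a x) (fun _ => b x) p) := by
    intro x p
    by_cases hp : p ∈ range k
    · obtain ⟨e, rfl⟩ := hp
      exact .inl ⟨e, rfl, hkinj.extend_apply _ _ e⟩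
    · exact .inr ⟨hp, extend_apply' _ _ _ hp⟩
  refine ⟨row', h.of_comp k hk hrow ?_, fun x p => ?_⟩
  · rintro x p ⟨d, rfl⟩ q hq
    obtain ⟨d', rfl⟩ : ∃ d', q = .inr d' := by cases q <;> simp_all
    rcases hvals x (.inl d) with ⟨e, he, hpe⟩ | ⟨-, hpa⟩ <;>
      rcases hvals x (.inr d') with ⟨e', he', hqe⟩ | ⟨-, hqb⟩
    · rw [hpe, hqe]
      exact h.separated x e ((hk e).1 (he ▸ mem_range_self d)) e' fun he'up =>
        hq (he' ▸ (hk e').2 he'up)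
    · rw [hpe, hqb]
      exact fun heq => hb x (.inl ⟨e, heq⟩)
    · rw [hpa, hqe]
      exact fun heq => ha x (.inl ⟨e', heq.symm⟩)
    · rw [hpa, hqb]
      exact hab x
  · rcases hvals x p with ⟨e, -, hpe⟩ | ⟨-, hpv⟩
    · exact hpe ▸ hW x e
    · cases p
      · exact hpv ▸ fun haW => ha x (.inr haW)
      · exact hpv ▸ fun hbW => hb x (.inr hbW)

theorem IsBadFamily.sigma {EM XM E ι : Type*} {X : ι → Type*} {upM : Set EM}
    {rowM : XM → EM → I} {up : Set E} {row : ∀ i, X i → E → I} (hM : IsBadFamily upM rowM)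
    {M : ι → XM} (hMinj : Injective M) (h : ∀ i, IsBadFamily up (row i))
    (hW : ∀ i x e, row i x e ∉ range (rowM (M i))) :
    IsBadFamily {e | Sum.elim (· ∈ upM) (· ∈ up) e}
      fun x : Σ i, X i => Sum.elim (rowM (M x.1)) (row x.1 x.2) := by
  refine ⟨?_, ?_, ?_⟩
  · rintro ⟨i, s⟩ ⟨j, t⟩ hst
    obtain rfl : i = j := hMinj (hM.injective (congrArg (· ∘ Sum.inl) hst))
    obtain rfl : s = t := (h i).injective (congrArg (· ∘ Sum.inr) hst)
    rfl
  · rintro ⟨i, s⟩ (a | a) ha (b | b) hb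
    · exact hM.separated _ a ha b hb
    · exact fun heq => hW i s b ⟨a, heq⟩
    · exact fun heq => hW i s a ⟨b, heq.symm⟩
    · exact (h i).separated s a ha b hb
  · -- a strict increase either changes the tag row `rowM (M i)` or stays inside one block
    refine Subrelation.wf ?_ (InvImage.wf (fun x : Σ i, X i => (⟨x.1, x.2⟩ : Σ' i, X i))
      (WellFounded.psigma_lex (InvImage.wf M hM.wellFounded) fun i => (h i).wellFounded))
    rintro ⟨i, s⟩ ⟨j, t⟩ ⟨hle, hne⟩
    by_cases hij : i = j
    · subst hij
      exact PSigma.Lex.right _ ⟨hle.comp Sum.inr fun _ => Iff.rfl, fun heq => hne (by rw [heq])⟩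
    · exact PSigma.Lex.left _ _ ⟨hle.comp Sum.inl fun _ => Iff.rfl,
        fun heq => hij (hMinj (hM.injective heq)).symm⟩

theorem exists_le_mk_preimage {X Y : Type u} (f : X → Y) {κ : Cardinal.{u}} (h : #Y * κ < #X) :
    ∃ y, κ ≤ #(f ⁻¹' {y}) := by
  by_contra! hlt
  exact (mk_le_mk_mul_of_mk_preimage_le f fun y => (hlt y).le).not_gt h

/-- Pigeonholing the rows by the pattern of their values in `W` and deleting the columns where
the pattern is fixed. -/
theorem HasBadFamily.exists_avoiding {θ κ : Cardinal.{u}} (hθ : ℵ₀ ≤ θ)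
    (h : HasBadFamily θ (Order.succ (2 ^ θ * κ)) I) {W : Set I} (hW : #W ≤ θ) :
    ∃ (E X : Type u) (up : Set E) (row : X → E → I),
      #E ≤ θ ∧ κ ≤ #X ∧ IsBadFamily up row ∧ ∀ x e, row x e ∉ W := by
  classical
  obtain ⟨E, X, up, row, hE, hX, hbad⟩ := h
  let q : X → E → Option W := fun x e => if hx : row x e ∈ W then some ⟨_, hx⟩ else none
  have hq : ∀ x e w, q x e = some w → row x e = w := fun x e w hw => by
    by_cases hx : row x e ∈ W <;> simp only [q, hx, dite_true, dite_false, Option.some.injEq,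
      reduceCtorEq] at hw
    exact congrArg Subtype.val hw
  have hpat : #(E → Option W) ≤ 2 ^ θ := calc
    #(E → Option W) = #(Option W) ^ #E := (power_def _ _).symm
    _ ≤ θ ^ θ := by
      refine (power_le_power_right ?_).trans (power_le_power_left (aleph0_pos.trans_le hθ).ne' hE)
      rw [mk_option]
      exact (add_le_add_left hW 1).trans (add_one_of_aleph0_le hθ).le
    _ = 2 ^ θ := power_self_eq hθ
  obtain ⟨p, hp⟩ := exists_le_mk_preimage q
    ((mul_le_mul_left hpat κ).trans_lt (Order.succ_le_iff.mp hX))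
  refine ⟨{e | p e = none}, q ⁻¹' {p}, _, _, (mk_subtype_le _).trans hE, hp,
    hbad.restrict _ _ fun x hx y hy e he => ?_, fun x e hxe => ?_⟩
  · obtain ⟨w, hw⟩ := Option.ne_none_iff_exists'.mp he
    rw [hq x e w ((congrFun hx e).trans hw), hq y e w ((congrFun hy e).trans hw)]
  · have hqx : q x e = none := (congrFun x.2 e).trans e.2
    simp [q, hxe] at hqx

theorem HasBadFamily.exists_sum_columns_avoiding {θ κ : Cardinal.{u}} (hθ : ℵ₀ ≤ θ) (hθI : θ < #I)
    (h : HasBadFamily θ (Order.succ (2 ^ θ * κ)) I) {W : Set I} (hW : #W ≤ θ) :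
    ∃ (X : Type u) (row : X → θ.out ⊕ θ.out → I),
      κ ≤ #X ∧ IsBadFamily (range Sum.inl) row ∧ ∀ x p, row x p ∉ W := by
  obtain ⟨E, X, up, row, hE, hX, hbad, hrowW⟩ := h.exists_avoiding hθ hW
  obtain ⟨j⟩ : Nonempty (E ↪ θ.out) := by rwa [← le_def, mk_out]
  have hI : ℵ₀ ≤ #I := hθ.trans hθI.le
  have : Infinite I := infinite_iff.mpr hI
  obtain ⟨row', hbad', hW'⟩ := hbad.exists_sum_columns j W hrowW fun x => by
    have hs : #(range (row x) ∪ W : Set I) < #I := (mk_union_le _ _).trans_lt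
      (add_lt_of_lt hI (mk_range_le.trans_lt (hE.trans_lt hθI)) (hW.trans_lt hθI))
    rw [← nontrivial_coe_sort, ← one_lt_iff_nontrivial, mk_compl_of_infinite _ hs]
    exact one_lt_aleph0.trans_le hI
  exact ⟨X, row', hX, hbad', hW'⟩

theorem exists_le_sum_of_isSingular {μ : Cardinal.{u}} (hμ : μ.IsSingular) :
    ∃ (ι : Type u) (κ : ι → Cardinal.{u}), #ι < μ ∧ (∀ i, κ i < μ) ∧ μ ≤ sum κ := by
  obtain ⟨S, hS, hSc⟩ := Order.exists_cof_eq μ.ord.ToType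
  refine ⟨S, fun s => #(Iic s.1), ?_, fun s => ?_, ?_⟩
  · rw [hSc, Ordinal.cof_toType]
    exact hμ.cof_ord_lt
  · have hIio : #(Iio s.1) < μ := by simpa using mk_Iio_lt s.1 (by simp)
    show #(Iic s.1) < μ
    rw [← Iio_insert]
    exact mk_insert_le.trans_lt
      (add_lt_of_lt hμ.aleph0_le hIio (one_lt_aleph0.trans_le hμ.aleph0_le))
  · have hcover : (⋃ s : S, Iic s.1) = Set.univ := iUnion_eq_univ_iff.mpr fun a => by
      obtain ⟨b, hb, hab⟩ := hS a
      exact ⟨⟨b, hb⟩, hab⟩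
    calc μ = #(⋃ s : S, Iic s.1) := by rw [hcover, mk_univ, mk_ord_toType]
      _ ≤ _ := mk_iUnion_le_sum_mk

theorem hasBadFamily_of_isSingular {θ μ : Cardinal.{u}} (hθ : ℵ₀ ≤ θ) (hθI : θ < #I)
    (hμ : μ.IsSingular) (h : ∀ κ < μ, HasBadFamily θ κ I) : HasBadFamily θ μ I := by
  rcases le_or_gt μ (2 ^ θ) with h2 | h2
  · have : Nontrivial I := one_lt_iff_nontrivial.mp (one_lt_aleph0.trans_le (hθ.trans hθI.le))
    exact (hasBadFamily_two_power hθ).mono h2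
  obtain ⟨ι, κ, hι, hκ, hsum⟩ := exists_le_sum_of_isSingular hμ
  obtain ⟨EM, XM, upM, rowM, hEM, hXM, hM⟩ := h _ hι
  obtain ⟨M⟩ := (le_def ι XM).mp hXM
  have hblock : ∀ i, ∃ (X : Type u) (row : X → θ.out ⊕ θ.out → I),
      κ i ≤ #X ∧ IsBadFamily (range Sum.inl) row ∧ ∀ x p, row x p ∉ range (rowM (M i)) := fun i =>
    have hlt : Order.succ (2 ^ θ * κ i) < μ :=
      hμ.isSuccLimit.succ_lt (mul_lt_of_lt hμ.aleph0_le h2 (hκ i))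
    (h _ hlt).exists_sum_columns_avoiding hθ hθI (mk_range_le.trans hEM)
  choose X row hX hbad hW using hblock
  refine ⟨EM ⊕ (θ.out ⊕ θ.out), Σ i, X i, _, _, ?_, ?_, hM.sigma M.injective hbad hW⟩
  · simpa [add_eq_left hθ le_rfl] using add_le_of_le hθ hEM le_rfl
  · rw [mk_sigma]
    exact hsum.trans (sum_le_sum _ _ hX)

end Entangled

/-- Proposition 6.21(2): for `σ = θ⁺ > ℵ₀` and `μ` singular, if `I` is
    strongly (μ,σ)-entangled then `I` is strongly (μ',σ)-entangled for some
    `μ' < μ`. -/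
theorem stmt_18 (θ σ μ : Cardinal.{u}) (I : Type u) [LinearOrder I]
    (hσ : σ = Order.succ θ) (hσω : ℵ₀ < σ)
    (hμinf : ℵ₀ ≤ μ) (hμsing : ¬μ.IsRegular)
    (hent : StronglyEntangled μ σ I) :
    ∃ μ' < μ, StronglyEntangled μ' σ I := by
  have hθ : ℵ₀ ≤ θ := Order.lt_succ_iff.mp (hσ ▸ hσω)
  have hσθ : σ + ℵ₀ = Order.succ θ := by rw [add_eq_left hσω.le hσω.le, hσ]
  have hμ : μ.IsSingular := .of_not_isRegular hμinf hμsing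
  have hσμ : σ + ℵ₀ < μ := hent.2.1.lt_of_ne fun h => not_isSingular_succ θ (hσθ ▸ h ▸ hμ)
  have hθI : θ < #I := (Order.lt_succ θ).trans_le (hσθ ▸ hent.1)
  by_contra! hcon
  refine (Entangled.hasBadFamily_of_isSingular hθ hθI hμ fun κ hκ => ?_).not_stronglyEntangled
    (hσ ▸ Order.lt_succ θ) hent
  exact (Entangled.hasBadFamily_of_not_stronglyEntangled hσ hθ hent.1 (le_max_right κ _)
    (hcon _ (max_lt hκ hσμ))).mono (le_max_left _ _)
end
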